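/- arXiv:1603.04052 — 11 statements merged into one kernel-verified Lean document; each statement's English description precedes it below -/
import Mathlib

section
/- Let f : ℕ → ℕ → ℕ satisfy (BASE3) f 3 n ≤ n − 3 for all n ≥ 3, (SIMPLEX) f d d = 0 for all d ≥ 4, (LOW) f d n ≤ f (d−1) (n−1) whenever 3 < d ≤ n < 2d, (KK) f d n ≤ f (d−1) (n−1) + 2·f d (n/2) + 2 whenever d ≥ 3 and n ≥ 2d, and (LIN) f d n ≤ 2^(d−1)·n for all n ≥ d ≥ 3. Then for all n ≥ d ≥ 3, (f d n : ℝ) ≤ (n − d)^(log₂(d−1)). -/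
/-!
Induction on `d`, and for fixed `d` on `n`. The simplex and low-facet cases are immediate
since the exponent `log₂ (d - 1)` increases with `d`. In the Kalai–Kleitman case put
`m = n - d` and `α = log₂ (d - 1)`. Since `m ^ log₂ c = c ^ log₂ m` and `2 ^ α = d - 1`, the
three terms of the recursion, divided by `m ^ α`, are at most `((d - 2) / (d - 1)) ^ log₂ m`,
`2 (m - d) / ((d - 1) m)` and `2 / m`. Writing `m = d · 2 ^ s`, their sum is at most `1` by
Bernoulli's inequality `(1 - t) ^ r ≥ 1 - r t` applied to
`2 ^ (-s) = ((d - 2) / (d - 1)) ^ (r s)`, where `r ≤ d - 1`.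
-/

open Real

namespace Real

theorem rpow_logb_comm (b : ℝ) {x y : ℝ} (hx : 0 < x) (hy : 0 < y) :
    x ^ logb b y = y ^ logb b x := by
  rw [rpow_def_of_pos hx, rpow_def_of_pos hy, logb, logb, mul_div_left_comm]

theorem rpow_le_div_mul_rpow {x y α : ℝ} (hy : 0 ≤ y) (hyx : y ≤ x) (hα : 1 ≤ α) :
    y ^ α ≤ y / x * x ^ α := by
  rcases hy.eq_or_lt with rfl | hy
  · simp [zero_rpow (by linarith : α ≠ 0)]
  have hx : 0 < x := hy.trans_le hyx
  calc y ^ α = y * y ^ (α - 1) := by rw [rpow_sub_one hy.ne', mul_div_cancel₀ _ hy.ne']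
    _ ≤ y * x ^ (α - 1) := by gcongr
    _ = y / x * x ^ α := by rw [rpow_sub_one hx.ne']; ring

theorem one_sub_rpow_le_mul_one_sub_rpow {p q : ℝ} (hp : 0 < p) (hpq : p ≤ q) (hq : q < 1)
    (s : ℝ) : 1 - p ^ s ≤ log p / log q * (1 - q ^ s) := by
  have hq0 : 0 < q := hp.trans_le hpq
  have hlogq : log q < 0 := log_neg hq0 hq
  have hr : 1 ≤ log p / log q := by
    rw [one_le_div_of_neg hlogq]; exact log_le_log hp hpq
  have hps : p ^ s = (q ^ s) ^ (log p / log q) := by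
    rw [← rpow_mul hq0.le, rpow_def_of_pos hp, rpow_def_of_pos hq0]
    congr 1
    field_simp [hlogq.ne]
  have hbern := one_add_mul_self_le_rpow_one_add
    (by linarith [rpow_nonneg hq0.le s] : -1 ≤ q ^ s - 1) hr
  rw [add_sub_cancel] at hbern
  rw [hps]
  linarith

theorem log_inv_two_div_log_le {q : ℝ} (hq0 : 0 < q) (hq1 : q < 1) :
    log 2⁻¹ / log q ≤ (1 - q)⁻¹ := by
  have hlogq : log q ≤ q - 1 := log_le_sub_one_of_pos hq0
  have hgap : 0 < 1 - q := by linarith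
  rw [div_le_iff_of_neg (log_neg hq0 hq1), log_inv]
  calc (1 - q)⁻¹ * log q ≤ (1 - q)⁻¹ * (q - 1) := by gcongr
    _ = -1 := by field_simp; ring
    _ ≤ -log 2 := by linarith [log_two_lt_d9]

end Real

theorem sub_one_mul_rpow_logb_le {D m : ℝ} (hD : 4 ≤ D) (hm : D ≤ m) :
    (D - 1) * ((D - 2) / (D - 1)) ^ logb 2 m ≤ D - 3 + 2 / m := by
  have hD1 : 0 < D - 1 := by linarith
  have hm0 : 0 < m := by linarith
  set q := (D - 2) / (D - 1) with hq_def
  have hq0 : 0 < q := div_pos (by linarith) hD1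
  have hq1 : q < 1 := (div_lt_one hD1).2 (by linarith)
  set s := logb 2 (m / D) with hs_def
  have hs : 0 ≤ s := logb_nonneg one_lt_two ((one_le_div (by linarith)).2 hm)
  have hsplit : q ^ logb 2 m = q ^ logb 2 D * q ^ s := by
    rw [← rpow_add hq0, hs_def, logb_div hm0.ne' (by linarith), add_sub_cancel]
  have hqD : (D - 1) * q ^ logb 2 D ≤ (D - 1) * (D - 2) / D := by
    have h2 : (2 : ℝ) ≤ logb 2 D := by
      rw [le_logb_iff_rpow_le one_lt_two (by linarith)]; norm_num; linarith
    calc (D - 1) * q ^ logb 2 D ≤ (D - 1) * q ^ (2 : ℝ) :=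
          mul_le_mul_of_nonneg_left (rpow_le_rpow_of_exponent_ge hq0 hq1.le h2) hD1.le
      _ ≤ (D - 1) * (D - 2) / D := by
          rw [rpow_two, hq_def, div_pow, mul_div_assoc',
            div_le_div_iff₀ (by positivity) (by linarith)]
          nlinarith
  have hhalf : (2⁻¹ : ℝ) ^ s = D / m := by
    rw [inv_rpow zero_le_two, rpow_logb zero_lt_two (by norm_num) (by positivity), inv_div]
  have hq_half : 2⁻¹ ≤ q := by rw [hq_def, le_div_iff₀ hD1]; linarith
  have hbern := one_sub_rpow_le_mul_one_sub_rpow (by norm_num) hq_half hq1 s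
  have hr : log 2⁻¹ / log q ≤ D - 1 := by
    convert log_inv_two_div_log_le hq0 hq1 using 1
    rw [hq_def]; field_simp; ring
  have hu1 : q ^ s ≤ 1 := rpow_le_one hq0.le hq1.le hs
  rw [hhalf] at hbern
  have hbern_le : 1 - D / m ≤ (D - 1) * (1 - q ^ s) :=
    hbern.trans (mul_le_mul_of_nonneg_right hr (by linarith))
  calc (D - 1) * q ^ logb 2 m = (D - 1) * q ^ logb 2 D * q ^ s := by rw [hsplit, mul_assoc]
    _ ≤ (D - 1) * (D - 2) / D * q ^ s := by gcongr
    _ ≤ D - 3 + 2 / D * (D / m) := by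
      have hcross : (D - 1) * (D - 2) * q ^ s ≤ D * (D - 3) + 2 * (D / m) := by
        nlinarith [mul_nonneg (mul_nonneg (by linarith : (0 : ℝ) ≤ D - 4) hD1.le)
          (by linarith : 0 ≤ 1 - q ^ s)]
      rw [div_mul_eq_mul_div, div_le_iff₀ (by linarith)]
      linarith [show (D - 3 + 2 / D * (D / m)) * D = D * (D - 3) + 2 * (D / m) by
        field_simp]
    _ = D - 3 + 2 / m := by field_simp

theorem kalaiKleitman_rpow_logb_le {D m : ℝ} (hD : 4 ≤ D) (hm : D ≤ m) :
    m ^ logb 2 (D - 2) + 2 * ((m - D) / 2) ^ logb 2 (D - 1) + 2 ≤ m ^ logb 2 (D - 1) := by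
  have hD1 : 0 < D - 1 := by linarith
  have hm0 : 0 < m := by linarith
  set α := logb 2 (D - 1) with hα_def
  set P := m ^ α with hP_def
  have hα : 1 ≤ α := by
    rw [hα_def, le_logb_iff_rpow_le one_lt_two hD1]; norm_num; linarith
  have hfirst : m ^ logb 2 (D - 2) = ((D - 2) / (D - 1)) ^ logb 2 m * P := by
    rw [rpow_logb_comm 2 hm0 (by linarith), hP_def, hα_def, rpow_logb_comm 2 hm0 hD1,
      ← mul_rpow (div_pos (by linarith) hD1).le hD1.le, div_mul_cancel₀ _ hD1.ne']
  have hmid : 2 * ((m - D) / 2) ^ α ≤ 2 / (D - 1) * ((m - D) / m * P) := by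
    rw [div_rpow (by linarith) zero_le_two, rpow_logb zero_lt_two (by norm_num) hD1,
      mul_div_assoc', div_mul_eq_mul_div]
    gcongr
    exact rpow_le_div_mul_rpow (by linarith) (by linarith) hα
  have hlast : 2 ≤ 2 / m * P := by
    rw [div_mul_eq_mul_div, le_div_iff₀ hm0]
    nlinarith [self_le_rpow_of_one_le (by linarith : 1 ≤ m) hα]
  calc m ^ logb 2 (D - 2) + 2 * ((m - D) / 2) ^ α + 2
      ≤ ((D - 2) / (D - 1)) ^ logb 2 m * P + 2 / (D - 1) * ((m - D) / m * P) + 2 / m * P := by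
        linarith
    _ = ((D - 1) * ((D - 2) / (D - 1)) ^ logb 2 m + 2 * (m - D) / m + 2 * (D - 1) / m)
          / (D - 1) * P := by
        field_simp
    _ ≤ ((D - 3 + 2 / m) + 2 * (m - D) / m + 2 * (D - 1) / m) / (D - 1) * P := by
        gcongr
        exact sub_one_mul_rpow_logb_le hD hm
    _ = P := by
        field_simp
        ring

noncomputable def quasipolyBound (d n : ℕ) : ℝ := ((n : ℝ) - d) ^ logb 2 ((d : ℝ) - 1)

theorem quasipolyBound_three {n : ℕ} (hn : 3 ≤ n) :
    quasipolyBound 3 n = ((n - 3 : ℕ) : ℝ) := by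
  norm_num [quasipolyBound, Nat.cast_sub hn]

theorem quasipolyBound_self {d : ℕ} (hd : 3 ≤ d) : quasipolyBound d d = 0 := by
  have hd' : (3 : ℝ) ≤ d := by exact_mod_cast hd
  have : 0 < logb 2 ((d : ℝ) - 1) := logb_pos one_lt_two (by linarith)
  simp [quasipolyBound, zero_rpow this.ne']

theorem quasipolyBound_pred_pred {d n : ℕ} (hd : 1 ≤ d) (hn : 1 ≤ n) :
    quasipolyBound (d - 1) (n - 1) = ((n : ℝ) - d) ^ logb 2 ((d : ℝ) - 2) := by
  simp only [quasipolyBound, Nat.cast_sub hd, Nat.cast_sub hn]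
  ring_nf

theorem quasipolyBound_pred_le {d n : ℕ} (hd : 3 ≤ d) (hdn : d < n) :
    quasipolyBound (d - 1) (n - 1) ≤ quasipolyBound d n := by
  have hd' : (3 : ℝ) ≤ d := by exact_mod_cast hd
  have hdn' : (d : ℝ) + 1 ≤ n := by exact_mod_cast hdn
  rw [quasipolyBound_pred_pred (by omega) (by omega), quasipolyBound]
  exact rpow_le_rpow_of_exponent_le (by linarith)
    (logb_le_logb_of_le one_lt_two (by linarith) (by linarith))

theorem quasipolyBound_kalaiKleitman {d n : ℕ} (hd : 4 ≤ d) (hdn : 2 * d ≤ n) :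
    quasipolyBound (d - 1) (n - 1) + 2 * quasipolyBound d (n / 2) + 2 ≤ quasipolyBound d n := by
  have hd' : (4 : ℝ) ≤ d := by exact_mod_cast hd
  have hdn' : 2 * (d : ℝ) ≤ n := by exact_mod_cast hdn
  have hd_half : (d : ℝ) ≤ (n / 2 : ℕ) := by exact_mod_cast (by omega : d ≤ n / 2)
  have hhalf_le : ((n / 2 : ℕ) : ℝ) ≤ n / 2 := Nat.cast_div_le
  rw [quasipolyBound_pred_pred (by omega) (by omega)]
  simp only [quasipolyBound]
  refine le_trans ?_ (kalaiKleitman_rpow_logb_le hd' (by linarith : (d : ℝ) ≤ n - d))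
  gcongr
  · exact logb_nonneg one_lt_two (by linarith)
  · linarith

theorem polyhedra_quasipolynomial_bound_general
    (f : ℕ → ℕ → ℕ)
    (base3 : ∀ n, 3 ≤ n → f 3 n ≤ n - 3)
    (simplex : ∀ d, 4 ≤ d → f d d = 0)
    (low : ∀ d n, 3 < d → d ≤ n → n < 2 * d → f d n ≤ f (d - 1) (n - 1))
    (kk : ∀ d n, 3 ≤ d → 2 * d ≤ n →
      f d n ≤ f (d - 1) (n - 1) + 2 * f d (n / 2) + 2) :
    ∀ d n, 3 ≤ d → d ≤ n →
      (f d n : ℝ) ≤ ((n : ℝ) - (d : ℝ)) ^ (Real.logb 2 ((d : ℝ) - 1)) := by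
  intro d
  induction d using Nat.strong_induction_on with | _ d ihd =>
  intro n hd hdn
  induction n using Nat.strong_induction_on with | _ n ihn =>
  change (f d n : ℝ) ≤ quasipolyBound d n
  obtain rfl | hd4 : d = 3 ∨ 4 ≤ d := by omega
  · rw [quasipolyBound_three hdn]
    exact_mod_cast base3 n hdn
  obtain rfl | hdn' := hdn.eq_or_lt
  · simp [simplex d hd4, quasipolyBound_self hd]
  have ih_pred : (f (d - 1) (n - 1) : ℝ) ≤ quasipolyBound (d - 1) (n - 1) :=
    ihd (d - 1) (by omega) (n - 1) (by omega) (by omega)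
  rcases lt_or_ge n (2 * d) with hlow | hhigh
  · calc (f d n : ℝ) ≤ f (d - 1) (n - 1) := by exact_mod_cast low d n hd4 hdn hlow
      _ ≤ quasipolyBound (d - 1) (n - 1) := ih_pred
      _ ≤ quasipolyBound d n := quasipolyBound_pred_le hd hdn'
  · calc (f d n : ℝ) ≤ f (d - 1) (n - 1) + 2 * f d (n / 2) + 2 := by
          exact_mod_cast kk d n hd hhigh
      _ ≤ quasipolyBound (d - 1) (n - 1) + 2 * quasipolyBound d (n / 2) + 2 := by
          gcongr
          exact ihn (n / 2) (by omega) (by omega)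
      _ ≤ quasipolyBound d n := quasipolyBound_kalaiKleitman hd4 hhigh

/-- Sukegawa–Kitahara / Todd tail-quasipolynomial bound for polyhedra:
if `f` satisfies the Klee–Walkup 3-dimensional bound, the simplex base case,
the low-facet dimension reduction, the Kalai–Kleitman recursion, and the
linear-in-fixed-dimension bound `2^(d-1) n`, then
`f d n ≤ (n - d) ^ log₂ (d - 1)` for all `n ≥ d ≥ 3`. -/
theorem polyhedra_quasipolynomial_bound
    (f : ℕ → ℕ → ℕ)
    (base3 : ∀ n, 3 ≤ n → f 3 n ≤ n - 3)
    (simplex : ∀ d, 4 ≤ d → f d d = 0)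
    (low : ∀ d n, 3 < d → d ≤ n → n < 2 * d → f d n ≤ f (d - 1) (n - 1))
    (kk : ∀ d n, 3 ≤ d → 2 * d ≤ n →
      f d n ≤ f (d - 1) (n - 1) + 2 * f d (n / 2) + 2)
    (lin : ∀ d n, 3 ≤ d → d ≤ n → f d n ≤ 2 ^ (d - 1) * n) :
    ∀ d n, 3 ≤ d → d ≤ n →
      (f d n : ℝ) ≤ ((n : ℝ) - (d : ℝ)) ^ (Real.logb 2 ((d : ℝ) - 1)) :=
  polyhedra_quasipolynomial_bound_general f base3 simplex low kk
end

section
/- Let f : ℕ → ℕ → ℕ satisfy (BASE3b) f 3 n ≤ ⌊2n/3⌋ − 1 for all n > 3, (SIMPLEX) f d d = 0 for all d ≥ 4, (LOW) f d n ≤ f (d−1) (n−1) whenever 3 < d ≤ n < 2d, and (KK) f d n ≤ f (d−1) (n−1) + 2·f d (n/2) + 2 whenever d ≥ 3 and n ≥ 2d. Then for all n > d ≥ 3, (f d n : ℝ) ≤ ((2/3)·(n − d + 3/2))^(log₂(d−1)). -/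
open Real


private lemma rlc {a c : ℝ} (ha : 0 < a) (hc : 0 < c) :
    a ^ Real.logb 2 c = c ^ Real.logb 2 a := by
  rw [Real.rpow_def_of_pos ha, Real.rpow_def_of_pos hc, Real.logb, Real.logb]
  ring_nf

private lemma rpow_div_nat_pow {x : ℝ} (hx : 0 ≤ x) {m n : ℕ} (hn : 0 < n) :
    (x ^ ((m : ℝ) / (n : ℝ))) ^ n = x ^ m := by
  rw [← Real.rpow_natCast (x ^ ((m : ℝ) / (n : ℝ))) n, ← Real.rpow_mul hx,
    div_mul_cancel₀ _ (by exact_mod_cast hn.ne'), Real.rpow_natCast]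

private lemma rpow_div_le' {x y : ℝ} {m n : ℕ} (hx : 0 ≤ x) (hy : 0 ≤ y) (hn : 0 < n)
    (h : x ^ m ≤ y ^ n) : x ^ ((m : ℝ) / (n : ℝ)) ≤ y :=
  le_of_pow_le_pow_left₀ hn.ne' hy (by rw [rpow_div_nat_pow hx hn]; exact h)

private lemma le_rpow_div {x y : ℝ} {m n : ℕ} (hx : 0 ≤ x) (hy : 0 ≤ y) (hn : 0 < n)
    (h : y ^ n ≤ x ^ m) : y ≤ x ^ ((m : ℝ) / (n : ℝ)) :=
  le_of_pow_le_pow_left₀ hn.ne' (by positivity) (by rw [rpow_div_nat_pow hx hn]; exact h)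

-- case A real lemma
private lemma lemA {D a : ℝ} (hD : 4 ≤ D) (ha : (2 * D + 3) / 3 ≤ a) :
    a ^ Real.logb 2 (D - 2) + 2 ≤ a ^ Real.logb 2 (D - 1) := by
  have hapos : (0 : ℝ) < a := by linarith
  have ha1 : (11 / 3 : ℝ) ≤ a := by linarith
  set L := Real.logb 2 a with hLdef
  have hid1 : a ^ Real.logb 2 (D - 2) = (D - 2) ^ L := rlc hapos (by linarith)
  have hid2 : a ^ Real.logb 2 (D - 1) = (D - 1) ^ L := rlc hapos (by linarith)
  have hL1 : (11 / 6 : ℝ) ≤ L := by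
    rw [hLdef]
    rw [Real.le_logb_iff_rpow_le one_lt_two hapos]
    calc (2 : ℝ) ^ ((11 : ℝ) / 6) = (2 : ℝ) ^ (((11 : ℕ) : ℝ) / ((6 : ℕ) : ℝ)) := by norm_num
    _ ≤ 11 / 3 := rpow_div_le' (by norm_num) (by norm_num) (by norm_num) (by norm_num)
    _ ≤ a := ha1
  have e1 : (D - 2) ^ L = (D - 2) ^ (L - 1) * (D - 2) := by
    rw [show L = (L - 1) + 1 by ring, Real.rpow_add_one (by linarith : D - 2 ≠ 0)]
    ring_nf
  have e2 : (D - 1) ^ L = (D - 1) ^ (L - 1) * (D - 1) := by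
    rw [show L = (L - 1) + 1 by ring, Real.rpow_add_one (by linarith : D - 1 ≠ 0)]
    ring_nf
  have m1 : (D - 2) ^ (L - 1) ≤ (D - 1) ^ (L - 1) :=
    Real.rpow_le_rpow (by linarith) (by linarith) (by linarith)
  have m2 : (3 : ℝ) ^ (L - 1) ≤ (D - 1) ^ (L - 1) :=
    Real.rpow_le_rpow (by norm_num) (by linarith) (by linarith)
  have m3 : (3 : ℝ) ^ ((5 : ℝ) / 6) ≤ (3 : ℝ) ^ (L - 1) :=
    Real.rpow_le_rpow_of_exponent_le (by norm_num) (by linarith)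
  have m4 : (2 : ℝ) ≤ (3 : ℝ) ^ ((5 : ℝ) / 6) := by
    calc (2 : ℝ) ≤ (3 : ℝ) ^ (((5 : ℕ) : ℝ) / ((6 : ℕ) : ℝ)) :=
      le_rpow_div (by norm_num) (by norm_num) (by norm_num) (by norm_num)
    _ = (3 : ℝ) ^ ((5 : ℝ) / 6) := by norm_num
  rw [hid1, hid2, e1, e2]
  nlinarith [mul_le_mul_of_nonneg_right m1 (by linarith : (0:ℝ) ≤ D - 2), m2, m3, m4]

private lemma lemB4 {a w : ℝ} (ha : 5 ≤ a) (hw : 0 ≤ w) (h2w : 2 * w ≤ a - 5 / 3) :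
    a + 2 * w ^ Real.logb 2 (3 : ℝ) + 2 ≤ a ^ Real.logb 2 (3 : ℝ) := by
  set g := Real.logb 2 (3 : ℝ) with hgdef
  have hg1 : (79 / 50 : ℝ) ≤ g := by
    rw [hgdef, Real.le_logb_iff_rpow_le one_lt_two (by norm_num)]
    calc (2 : ℝ) ^ ((79 : ℝ) / 50) = (2 : ℝ) ^ (((79 : ℕ) : ℝ) / ((50 : ℕ) : ℝ)) := by norm_num
    _ ≤ 3 := by
      apply le_of_pow_le_pow_left₀ (n := 50) (by norm_num) (by norm_num)
      rw [rpow_div_nat_pow (by norm_num : (0:ℝ) ≤ 2) (by norm_num)]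
      norm_num
  have hgge1 : (1 : ℝ) ≤ g := by linarith
  have h2g : (2 : ℝ) ^ g = 3 := by
    rw [hgdef]; exact Real.rpow_logb (by norm_num) (by norm_num) (by norm_num)
  have hapos : (0 : ℝ) < a := by linarith
  -- bound 2 * w ^ g ≤ (2/3) * (a - 5/3) ^ g
  have hwg : w ^ g ≤ (a - 5 / 3) ^ g / 3 := by
    have h1 : w ^ g ≤ ((a - 5 / 3) / 2) ^ g :=
      Real.rpow_le_rpow hw (by linarith) (by linarith)
    have h2 : ((a - 5 / 3) / 2) ^ g = (a - 5 / 3) ^ g / (2 : ℝ) ^ g :=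
      Real.div_rpow (by linarith) (by norm_num) g
    rw [h2, h2g] at h1; exact h1
  -- (a - 5/3)^g ≤ a^(g-1) * (a - 5/3)
  set t := a ^ (g - 1) with htdef
  have htpos : 0 < t := Real.rpow_pos_of_pos hapos _
  have hag : a ^ g = t * a := by
    have e : a ^ ((g - 1) + 1) = a ^ (g - 1) * a := Real.rpow_add_one hapos.ne' (g - 1)
    rw [htdef, ← e]; norm_num
  have hsplit : (a - 5 / 3) ^ g ≤ t * (a - 5 / 3) := by
    have e : (a - 5/3) ^ ((g - 1) + 1) = (a - 5/3) ^ (g - 1) * (a - 5/3) :=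
      Real.rpow_add_one (by linarith : a - 5/3 ≠ 0) (g - 1)
    rw [show g = (g - 1) + 1 by ring, e]
    have : (a - 5 / 3) ^ (g - 1) ≤ t :=
      Real.rpow_le_rpow (by linarith) (by linarith) (by linarith)
    exact mul_le_mul_of_nonneg_right this (by linarith)
  -- lower bound on a^g : Bernoulli at 5
  have h5g : (127 / 10 : ℝ) ≤ (5 : ℝ) ^ g := by
    calc (127 / 10 : ℝ) ≤ (5 : ℝ) ^ (((79 : ℕ) : ℝ) / ((50 : ℕ) : ℝ)) := by
          apply le_rpow_div (by norm_num) (by norm_num) (by norm_num)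
          norm_num
    _ ≤ (5 : ℝ) ^ g := by
          apply Real.rpow_le_rpow_of_exponent_le (by norm_num)
          push_cast; linarith
  have hbern : 1 + g * ((a - 5) / 5) ≤ (1 + (a - 5) / 5) ^ g :=
    one_add_mul_self_le_rpow_one_add (by linarith) hgge1
  have hagdecomp : a ^ g = (5 : ℝ) ^ g * (1 + (a - 5) / 5) ^ g := by
    rw [← Real.mul_rpow (by norm_num) (by linarith)]
    congr 1; ring
  have hP : (127 / 10 : ℝ) + (10033 / 2500) * (a - 5) ≤ a ^ g := by
    rw [hagdecomp]
    have h1 : (1 : ℝ) + (79 / 50) * ((a - 5) / 5) ≤ (1 + (a - 5) / 5) ^ g := by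
      have : (1 : ℝ) + (79 / 50) * ((a - 5) / 5) ≤ 1 + g * ((a - 5) / 5) := by
        have : (0:ℝ) ≤ (a - 5) / 5 := by linarith
        nlinarith
      linarith
    have h2 : (0:ℝ) < 1 + (79 / 50) * ((a - 5) / 5) := by nlinarith
    calc (127 / 10 : ℝ) + (10033 / 2500) * (a - 5)
        = (127 / 10) * (1 + (79 / 50) * ((a - 5) / 5)) := by ring
      _ ≤ (5 : ℝ) ^ g * (1 + (79 / 50) * ((a - 5) / 5)) :=
          mul_le_mul_of_nonneg_right h5g (by linarith)
      _ ≤ (5 : ℝ) ^ g * (1 + (a - 5) / 5) ^ g :=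
          mul_le_mul_of_nonneg_left h1 (by positivity)
  -- key polynomial inequality
  have key : 9 * a * (a + 2) ≤ a ^ g * (3 * a + 10) := by
    have h1 : (127 / 10 + (10033 / 2500) * (a - 5)) * (3 * a + 10) ≤ a ^ g * (3 * a + 10) :=
      mul_le_mul_of_nonneg_right hP (by linarith)
    nlinarith [sq_nonneg (a - 5)]
  have h9 : 9 * (a + 2) ≤ t * (3 * a + 10) := by
    have : (9 * (a + 2)) * a ≤ (t * (3 * a + 10)) * a := by nlinarith [key, hag]
    exact le_of_mul_le_mul_right this hapos
  rw [hag]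
  nlinarith [hwg, hsplit, h9, htpos]

private lemma dag5small {D a L : ℝ} (hD : 5 ≤ D) (ha : (2 * D + 7) / 3 ≤ a) (hL2 : 2 ≤ L)
    (hcase : a ≤ (2 * D - 3) / 3 * D) :
    2 * (D - 2 + L) * (D - 1) + 2 * (a - (2 * D - 3) / 3) ^ 2 * (D - 2 + L)
      ≤ a ^ 2 * L * (D - 1) := by
  have hpoly : 0 ≤ (D - 1) * a ^ 2 - D * (a - (2 * D - 3) / 3) ^ 2 - D * (D - 1) := by
    have h1 : 0 ≤ a - (2 * D + 7) / 3 := by linarith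
    have h2 : 0 ≤ (2 * D - 3) / 3 * D - a := by linarith
    have h3 : 0 ≤ (2 * D - 3) / 3 * D - (2 * D + 7) / 3 := by nlinarith
    have h5 : (0:ℝ) ≤ D - 5 := by linarith
    nlinarith [mul_nonneg h1 h2, mul_nonneg h3 h1, mul_nonneg (mul_nonneg h5 h5) h5,
      sq_nonneg (D - 5)]
  have h2M : 2 * (D - 2 + L) ≤ L * D := by
    nlinarith [mul_nonneg (by linarith : (0:ℝ) ≤ L - 2) (by linarith : (0:ℝ) ≤ D - 2)]
  have tA : 2 * (D - 2 + L) * (a - (2 * D - 3) / 3) ^ 2 ≤ L * D * (a - (2 * D - 3) / 3) ^ 2 :=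
    mul_le_mul_of_nonneg_right h2M (sq_nonneg _)
  have tB : 2 * (D - 2 + L) * (D - 1) ≤ L * D * (D - 1) :=
    mul_le_mul_of_nonneg_right h2M (by linarith)
  have tC : 0 ≤ L * ((D - 1) * a ^ 2 - D * (a - (2 * D - 3) / 3) ^ 2 - D * (D - 1)) :=
    mul_nonneg (by linarith) hpoly
  nlinarith [tA, tB, tC]

private lemma dag5large {D a L : ℝ} (hD : 5 ≤ D) (ha : (2 * D + 7) / 3 ≤ a) (hL7 : 7 / 2 ≤ L)
    (hcase : (2 * D - 3) / 3 * D ≤ a) :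
    2 * (D - 2 + L) * (D - 1) + 2 * (a - (2 * D - 3) / 3) ^ 2 * (D - 2 + L)
      ≤ a ^ 2 * L * (D - 1) := by
  have hq : (a - (2 * D - 3) / 3) ^ 2 ≤ a ^ 2 := by nlinarith
  have h00 : (0:ℝ) ≤ (2 * D - 3) / 3 * D := by nlinarith
  have ha2 : ((2 * D - 3) / 3 * D) ^ 2 ≤ a ^ 2 := by
    nlinarith [mul_le_mul hcase hcase h00 (h00.trans hcase)]
  have u1 : 2 * (D - 2 + L) * (a - (2 * D - 3) / 3) ^ 2 ≤ 2 * (D - 2 + L) * a ^ 2 :=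
    mul_le_mul_of_nonneg_left hq (by linarith)
  have u2 : 0 ≤ (L - 7 / 2) * (a ^ 2 * (D - 3) - 2 * (D - 1)) := by
    apply mul_nonneg (by linarith)
    nlinarith [ha2, sq_nonneg (D - 5)]
  have u3 : (2 * D + 3) * (D - 1) ≤ a ^ 2 * ((3 * D - 13) / 2) := by
    have h5 : (0:ℝ) ≤ D - 5 := by linarith
    have hpoly2 : (2 * D + 3) * (D - 1) ≤ ((2 * D - 3) / 3 * D) ^ 2 * ((3 * D - 13) / 2) := by
      nlinarith [sq_nonneg (D - 5), mul_nonneg (mul_nonneg h5 h5) h5,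
        mul_nonneg (mul_nonneg (mul_nonneg h5 h5) h5) h5]
    calc (2 * D + 3) * (D - 1) ≤ ((2 * D - 3) / 3 * D) ^ 2 * ((3 * D - 13) / 2) := hpoly2
    _ ≤ a ^ 2 * ((3 * D - 13) / 2) := mul_le_mul_of_nonneg_right ha2 (by linarith)
  nlinarith [u1, u2, u3]

set_option maxHeartbeats 1000000 in
private lemma lemB5 {D a w : ℝ} (hD : 5 ≤ D) (ha : (2 * D + 7) / 3 ≤ a) (hw : 0 ≤ w)
    (h2w : 2 * w ≤ a - (2 * D - 3) / 3) :
    a ^ Real.logb 2 (D - 2) + 2 * w ^ Real.logb 2 (D - 1) + 2 ≤ a ^ Real.logb 2 (D - 1) := by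
  have hapos : (0 : ℝ) < a := by linarith
  have hca : (2 * D - 3) / 3 + 10 / 3 ≤ a := by linarith
  have hD2 : (0:ℝ) < D - 2 := by linarith
  have hD1 : (0:ℝ) < D - 1 := by linarith
  set α := Real.logb 2 (D - 1) with hαdef
  set L := Real.logb 2 a with hLdef
  have h22 : (2 : ℝ) ^ (2 : ℝ) = 4 := by
    rw [show (2:ℝ) = ((2:ℕ):ℝ) from by norm_num, Real.rpow_natCast]; norm_num
  have hα2 : (2 : ℝ) ≤ α := by
    rw [hαdef, Real.le_logb_iff_rpow_le one_lt_two (by linarith), h22]; linarith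
  have hL2 : (2 : ℝ) ≤ L := by
    rw [hLdef, Real.le_logb_iff_rpow_le one_lt_two hapos, h22]; linarith
  have hA : a ^ α = (D - 1) ^ L := rlc hapos (by linarith)
  have hB : a ^ Real.logb 2 (D - 2) = (D - 2) ^ L := rlc hapos (by linarith)
  set A := (D - 1) ^ L with hAdef
  set B := (D - 2) ^ L with hBdef
  have hApos : 0 < A := Real.rpow_pos_of_pos (by linarith) _
  have hBpos : 0 < B := Real.rpow_pos_of_pos (by linarith) _
  -- Bernoulli : B * (D - 2 + L) ≤ A * (D - 2)
  have hbern : B * (D - 2 + L) ≤ A * (D - 2) := by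
    have hsplit : A = B * ((D - 1) / (D - 2)) ^ L := by
      rw [hAdef, hBdef, ← Real.mul_rpow (by linarith) (div_nonneg (by linarith) (by linarith))]
      congr 1
      field_simp
    have hfrac : (D - 1) / (D - 2) = 1 + 1 / (D - 2) := by
      field_simp
      ring
    have h0 : (0:ℝ) ≤ 1 / (D - 2) := by positivity
    have hb : 1 + L * (1 / (D - 2)) ≤ (1 + 1 / (D - 2)) ^ L :=
      one_add_mul_self_le_rpow_one_add (by linarith) (by linarith)
    have h1 : B * (1 + L * (1 / (D - 2))) ≤ A := by
      rw [hsplit, hfrac]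
      exact mul_le_mul_of_nonneg_left hb hBpos.le
    have h2 : (1 + L * (1 / (D - 2))) * (D - 2) = D - 2 + L := by
      field_simp
    calc B * (D - 2 + L) = B * (1 + L * (1 / (D - 2))) * (D - 2) := by rw [mul_assoc, h2]
    _ ≤ A * (D - 2) := mul_le_mul_of_nonneg_right h1 (by linarith)
  -- w-term
  have h2α : (2 : ℝ) ^ α = D - 1 := by
    rw [hαdef]; exact Real.rpow_logb (by norm_num) (by norm_num) (by linarith)
  have hwterm : w ^ α * (D - 1) ≤ (a - (2 * D - 3) / 3) ^ α := by
    have h1 : w ^ α ≤ ((a - (2 * D - 3) / 3) / 2) ^ α :=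
      Real.rpow_le_rpow hw (by linarith) (by linarith)
    have h2 : ((a - (2 * D - 3) / 3) / 2) ^ α = (a - (2 * D - 3) / 3) ^ α / (D - 1) := by
      rw [Real.div_rpow (by linarith) (by norm_num), h2α]
    rw [h2, le_div_iff₀ hD1] at h1
    exact h1
  -- (a-c)^α * a^2 ≤ A * (a-c)^2
  have hacpos : (0 : ℝ) < a - (2 * D - 3) / 3 := by linarith
  have hC : (a - (2 * D - 3) / 3) ^ α * a ^ 2 ≤ A * (a - (2 * D - 3) / 3) ^ 2 := by
    have e1 : (a - (2 * D - 3) / 3) ^ α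
        = (a - (2 * D - 3) / 3) ^ (α - 2) * (a - (2 * D - 3) / 3) ^ 2 := by
      rw [← Real.rpow_natCast (a - (2 * D - 3) / 3) 2, ← Real.rpow_add hacpos]
      norm_num
    have e2 : A = a ^ (α - 2) * a ^ 2 := by
      rw [← hA, ← Real.rpow_natCast a 2, ← Real.rpow_add hapos]
      norm_num
    have m : (a - (2 * D - 3) / 3) ^ (α - 2) ≤ a ^ (α - 2) :=
      Real.rpow_le_rpow (by linarith) (by linarith) (by linarith)
    have h2 : (0:ℝ) ≤ (a - (2 * D - 3) / 3) ^ 2 * a ^ 2 := by positivity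
    have := mul_le_mul_of_nonneg_right m h2
    rw [e1, e2]
    nlinarith [this]
  -- a^2 ≤ A
  have hA2 : a ^ 2 ≤ A := by
    rw [← hA, ← Real.rpow_natCast a 2]
    exact Real.rpow_le_rpow_of_exponent_le (by linarith) (by push_cast; linarith)
  -- the dagger inequality
  have hdag : 2 * (D - 2 + L) * (D - 1) + 2 * (a - (2 * D - 3) / 3) ^ 2 * (D - 2 + L)
      ≤ a ^ 2 * L * (D - 1) := by
    rcases le_or_gt a ((2 * D - 3) / 3 * D) with hcase | hcase
    · exact dag5small hD ha hL2 hcase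
    · have hL7 : (7 / 2 : ℝ) ≤ L := by
        rw [hLdef, Real.le_logb_iff_rpow_le one_lt_two hapos]
        have h35 : (2 : ℝ) ^ ((7 : ℝ) / 2) ≤ 35 / 3 := by
          calc (2 : ℝ) ^ ((7 : ℝ) / 2) = (2 : ℝ) ^ (((7 : ℕ) : ℝ) / ((2 : ℕ) : ℝ)) := by norm_num
          _ ≤ 35 / 3 := rpow_div_le' (by norm_num) (by norm_num) (by norm_num) (by norm_num)
        have h2 : (35 / 3 : ℝ) ≤ (2 * D - 3) / 3 * D := by nlinarith
        linarith
      exact dag5large hD ha hL7 hcase.le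
  -- combine
  have hMpos : (0 : ℝ) < D - 2 + L := by linarith
  have f1 : B * (D - 2 + L) * ((D - 1) * a ^ 2) ≤ A * (D - 2) * ((D - 1) * a ^ 2) :=
    mul_le_mul_of_nonneg_right hbern (by positivity)
  have f0 : w ^ α * (D - 1) * a ^ 2 ≤ A * (a - (2 * D - 3) / 3) ^ 2 :=
    calc w ^ α * (D - 1) * a ^ 2 ≤ (a - (2 * D - 3) / 3) ^ α * a ^ 2 :=
      mul_le_mul_of_nonneg_right hwterm (by positivity)
    _ ≤ A * (a - (2 * D - 3) / 3) ^ 2 := hC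
  have f0' : w ^ α * (D - 1) * a ^ 2 * (2 * (D - 2 + L))
      ≤ A * (a - (2 * D - 3) / 3) ^ 2 * (2 * (D - 2 + L)) :=
    mul_le_mul_of_nonneg_right f0 (by positivity)
  have hbr : 0 ≤ L * (D - 1) * a ^ 2 - 2 * (D - 2 + L) * (a - (2 * D - 3) / 3) ^ 2 := by
    nlinarith [hdag]
  have s2 : a ^ 2 * (2 * (D - 2 + L) * (D - 1))
      ≤ a ^ 2 * (L * (D - 1) * a ^ 2 - 2 * (D - 2 + L) * (a - (2 * D - 3) / 3) ^ 2) := by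
    apply mul_le_mul_of_nonneg_left _ (sq_nonneg a)
    nlinarith [hdag]
  have s3 : a ^ 2 * (L * (D - 1) * a ^ 2 - 2 * (D - 2 + L) * (a - (2 * D - 3) / 3) ^ 2)
      ≤ A * (L * (D - 1) * a ^ 2 - 2 * (D - 2 + L) * (a - (2 * D - 3) / 3) ^ 2) :=
    mul_le_mul_of_nonneg_right hA2 hbr
  have final : (B + 2 * w ^ α + 2) * ((D - 2 + L) * (D - 1) * a ^ 2)
      ≤ A * ((D - 2 + L) * (D - 1) * a ^ 2) := by
    nlinarith [f1, f0', s2, s3]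
  have hposM : (0 : ℝ) < (D - 2 + L) * (D - 1) * a ^ 2 := by positivity
  have hfin : B + 2 * w ^ α + 2 ≤ A := le_of_mul_le_mul_right final hposM
  rw [hB, hA]
  linarith [hfin]

private lemma lemB {D a w : ℝ} (hD : D = 4 ∨ 5 ≤ D) (ha : (2 * D + 7) / 3 ≤ a) (hw : 0 ≤ w)
    (h2w : 2 * w ≤ a - (2 * D - 3) / 3) :
    a ^ Real.logb 2 (D - 2) + 2 * w ^ Real.logb 2 (D - 1) + 2 ≤ a ^ Real.logb 2 (D - 1) := by
  rcases hD with h4 | h5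
  · subst h4
    norm_num at ha h2w ⊢
    exact lemB4 ha hw h2w
  · exact lemB5 h5 ha hw h2w

/-- Tail-quasipolynomial bound for polytopes: if `f` satisfies Klee's sharp
3-dimensional bound `⌊2n/3⌋ - 1`, the simplex base case, the low-facet
dimension reduction, and the Kalai–Kleitman recursion, then
`f d n ≤ ((2/3)(n - d + 3/2)) ^ log₂ (d - 1)` for all `n > d ≥ 3`. -/
theorem polytopes_quasipolynomial_bound
    (f : ℕ → ℕ → ℕ)
    (base3b : ∀ n, 3 < n → f 3 n ≤ 2 * n / 3 - 1)
    (simplex : ∀ d, 4 ≤ d → f d d = 0)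
    (low : ∀ d n, 3 < d → d ≤ n → n < 2 * d → f d n ≤ f (d - 1) (n - 1))
    (kk : ∀ d n, 3 ≤ d → 2 * d ≤ n →
      f d n ≤ f (d - 1) (n - 1) + 2 * f d (n / 2) + 2) :
    ∀ d n, 3 ≤ d → d < n →
      (f d n : ℝ) ≤
        ((2 / 3 : ℝ) * ((n : ℝ) - (d : ℝ) + 3 / 2)) ^
          (Real.logb 2 ((d : ℝ) - 1)) := by
  have key : ∀ N d n : ℕ, d + n ≤ N → 3 ≤ d → d < n →
      (f d n : ℝ) ≤ ((2 / 3 : ℝ) * ((n : ℝ) - (d : ℝ) + 3 / 2)) ^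
        (Real.logb 2 ((d : ℝ) - 1)) := by
    intro N
    induction N with
    | zero => intro d n h hd hdn; omega
    | succ N ih =>
      intro d n hN hd3 hdn
      by_cases hd : d = 3
      · -- dimension 3 : Klee's bound
        subst hd
        have hfn := base3b n (by omega)
        have h31 : ((3 : ℕ) : ℝ) - 1 = 2 := by norm_num
        rw [h31, Real.logb_self_eq_one one_lt_two, Real.rpow_one]
        have h2 : (1 : ℕ) ≤ 2 * n / 3 := by omega
        have h3 : ((2 * n / 3 - 1 : ℕ) : ℝ) = ((2 * n / 3 : ℕ) : ℝ) - 1 := by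
          rw [Nat.cast_sub h2]; norm_num
        have h4 : ((2 * n / 3 : ℕ) : ℝ) ≤ 2 * (n : ℝ) / 3 := by
          have := Nat.cast_div_le (α := ℝ) (m := 2 * n) (n := 3)
          push_cast at this
          linarith
        calc (f 3 n : ℝ) ≤ ((2 * n / 3 - 1 : ℕ) : ℝ) := by exact_mod_cast hfn
          _ = ((2 * n / 3 : ℕ) : ℝ) - 1 := h3
          _ ≤ 2 * (n : ℝ) / 3 - 1 := by linarith
          _ ≤ 2 / 3 * ((n : ℝ) - ((3 : ℕ) : ℝ) + 3 / 2) := by push_cast; nlinarith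
      · -- dimension at least 4
        have hd4 : 4 ≤ d := by omega
        have hdR : (4 : ℝ) ≤ (d : ℝ) := by exact_mod_cast hd4
        have hnR : (d : ℝ) + 1 ≤ (n : ℝ) := by exact_mod_cast (by omega : d + 1 ≤ n)
        have hcast1 : ((d - 1 : ℕ) : ℝ) = (d : ℝ) - 1 := by
          rw [Nat.cast_sub (by omega : 1 ≤ d)]; norm_num
        have hcast2 : ((n - 1 : ℕ) : ℝ) = (n : ℝ) - 1 := by
          rw [Nat.cast_sub (by omega : 1 ≤ n)]; norm_num
        -- induction hypothesis applied to (d-1, n-1)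
        have hIH1 : (f (d - 1) (n - 1) : ℝ)
            ≤ ((2 / 3 : ℝ) * ((n : ℝ) - (d : ℝ) + 3 / 2)) ^ Real.logb 2 ((d : ℝ) - 2) := by
          have h := ih (d - 1) (n - 1) (by omega) (by omega) (by omega)
          rw [hcast1, hcast2] at h
          rw [show (2 / 3 : ℝ) * ((n : ℝ) - 1 - ((d : ℝ) - 1) + 3 / 2)
              = (2 / 3 : ℝ) * ((n : ℝ) - (d : ℝ) + 3 / 2) from by ring,
            show (d : ℝ) - 1 - 1 = (d : ℝ) - 2 from by ring] at h
          exact h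
        rcases lt_or_ge n (2 * d) with hlow | hkk
        · -- low facet count : use the dimension reduction
          have hstep : (f d n : ℝ) ≤ (f (d - 1) (n - 1) : ℝ) := by
            exact_mod_cast low d n (by omega) (by omega) hlow
          have hu1 : (1 : ℝ) ≤ (2 / 3 : ℝ) * ((n : ℝ) - (d : ℝ) + 3 / 2) := by nlinarith
          calc (f d n : ℝ) ≤ (f (d - 1) (n - 1) : ℝ) := hstep
            _ ≤ ((2 / 3 : ℝ) * ((n : ℝ) - (d : ℝ) + 3 / 2)) ^ Real.logb 2 ((d : ℝ) - 2) := hIH1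
            _ ≤ ((2 / 3 : ℝ) * ((n : ℝ) - (d : ℝ) + 3 / 2)) ^ Real.logb 2 ((d : ℝ) - 1) := by
              apply Real.rpow_le_rpow_of_exponent_le hu1
              apply Real.logb_le_logb_of_le one_lt_two (by linarith) (by linarith)
        · -- Kalai-Kleitman recursion
          have hstep : (f d n : ℝ) ≤ (f (d - 1) (n - 1) : ℝ) + 2 * (f d (n / 2) : ℝ) + 2 := by
            exact_mod_cast kk d n (by omega) hkk
          have h2dR : 2 * (d : ℝ) ≤ (n : ℝ) := by exact_mod_cast hkk
          rcases lt_or_ge n (2 * d + 2) with hsm | hlg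
          · -- n/2 = d : simplex case
            have hzero : f d (n / 2) = 0 := by
              rw [show n / 2 = d from by omega]; exact simplex d hd4
            have hfin := lemA hdR (show (2 * (d:ℝ) + 3) / 3 ≤ (2 / 3 : ℝ) * ((n : ℝ) - (d : ℝ) + 3 / 2)
              from by nlinarith)
            rw [hzero] at hstep
            push_cast at hstep
            linarith [hIH1, hfin]
          · -- n ≥ 2d + 2 : use recursion with the half-size bound
            have hhalf1 : d < n / 2 := by omega
            have hIH2 : (f d (n / 2) : ℝ)
                ≤ ((2 / 3 : ℝ) * (((n / 2 : ℕ) : ℝ) - (d : ℝ) + 3 / 2)) ^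
                    Real.logb 2 ((d : ℝ) - 1) :=
              ih d (n / 2) (by omega) (by omega) hhalf1
            have hhalfR : 2 * ((n / 2 : ℕ) : ℝ) ≤ (n : ℝ) := by
              exact_mod_cast (by omega : 2 * (n / 2) ≤ n)
            have hhalfR2 : (d : ℝ) + 1 ≤ ((n / 2 : ℕ) : ℝ) := by
              exact_mod_cast (by omega : d + 1 ≤ n / 2)
            have hlgR : 2 * (d : ℝ) + 2 ≤ (n : ℝ) := by exact_mod_cast hlg
            have hfin := lemB (D := (d : ℝ))
              (by rcases eq_or_lt_of_le hd4 with h | h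
                  · left; exact_mod_cast h.symm
                  · right; exact_mod_cast (by omega : (5:ℕ) ≤ d))
              (a := (2 / 3 : ℝ) * ((n : ℝ) - (d : ℝ) + 3 / 2))
              (w := (2 / 3 : ℝ) * (((n / 2 : ℕ) : ℝ) - (d : ℝ) + 3 / 2))
              (by nlinarith) (by nlinarith) (by nlinarith)
            linarith [hIH1, hIH2, hfin,
              mul_le_mul_of_nonneg_left hIH2 (by norm_num : (0:ℝ) ≤ 2)]
  exact fun d n hd hdn => key (d + n) d n le_rfl hd hdn
end

section
/- Let f : ℕ → ℕ → ℕ satisfy (BASE2) f 2 n ≤ n/2 for all n ≥ 2, (SIMPLEX) f d d = 0 for all d ≥ 3, (LOW) f d n ≤ f (d−1) (n−1) whenever 2 < d ≤ n < 2d, (KK) f d n ≤ f (d−1) (n−1) + 2·f d (n/2) + 2 whenever d ≥ 3 and n ≥ 2d, and (LIN) f d n ≤ 2^(d−3)·n for all n ≥ d ≥ 3. Then for all n > d ≥ 4, (f d n : ℝ) ≤ (n − d)^(log₂ d). -/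
/-!
We prove `f d n ≤ (n - d) ^ log₂ d` for all `3 ≤ d ≤ n` by strong induction on `n`.
For `d = 3` this follows from the small cases `n ≤ 6` and the linear bound. For `d ≥ 4`
the low-vertex reduction loses nothing, because `log₂ (d - 1) ≤ log₂ d`. In the
Kalai–Kleitman case, put `m = n - d ≥ d`. The induction hypotheses bound the right-hand
side of the recursion by `m ^ log₂ (d - 1) + 2 ((m - d) / 2) ^ log₂ d + 2`. Two identities
do the work: `2 ^ log₂ d = d` turns the middle term into at most `2 m ^ log₂ d / d - 2`, and
`d ^ log₂ (d - 1) = (d - 1) ^ log₂ d` bounds the first term by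
`(1 - 1/d) ^ log₂ d · m ^ log₂ d`. The sum is then at most `m ^ log₂ d` as soon as
`(1 - 1/d) ^ log₂ d ≤ 1 - 2/d`, which holds for every `d ≥ 5`. The case `d = 4` is
checked directly.
-/

open Real

lemma rpow_logb_comm {b a c : ℝ} (hb : 0 < b) (hb1 : b ≠ 1) (ha : 0 < a) (hc : 0 < c) :
    a ^ logb b c = c ^ logb b a := by
  conv_lhs => rw [← rpow_logb hb hb1 ha]
  conv_rhs => rw [← rpow_logb hb hb1 hc]
  rw [← rpow_mul hb.le, ← rpow_mul hb.le, mul_comm]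

lemma logb_two_pow (k : ℕ) : logb 2 ((2 : ℝ) ^ k) = k := by
  rw [logb_pow, logb_self_eq_one one_lt_two, mul_one]

lemma rpow_mul_rpow_le_of_le {a m e L : ℝ} (ha : 0 < a) (ham : a ≤ m) (heL : e ≤ L) :
    m ^ e * a ^ L ≤ m ^ L * a ^ e := by
  have hm : 0 < m := ha.trans_le ham
  calc m ^ e * a ^ L = m ^ e * a ^ e * a ^ (L - e) := by
        rw [mul_assoc, ← rpow_add ha, add_sub_cancel]
    _ ≤ m ^ e * a ^ e * m ^ (L - e) := by gcongr
    _ = m ^ L * a ^ e := by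
        rw [mul_right_comm, ← rpow_add hm, add_sub_cancel]

lemma sub_rpow_le {d m L : ℝ} (hd : 0 ≤ d) (hdm : d ≤ m) (hL : 1 ≤ L) :
    (m - d) ^ L ≤ m ^ L - d * m ^ (L - 1) := by
  have split : ∀ x : ℝ, 0 ≤ x → x ^ L = x ^ (L - 1) * x := fun x hx => by
    rw [← rpow_add_one' hx (by linarith), sub_add_cancel]
  have hmono : (m - d) ^ (L - 1) ≤ m ^ (L - 1) :=
    rpow_le_rpow (sub_nonneg.2 hdm) (by linarith) (by linarith)
  rw [split _ (sub_nonneg.2 hdm), split m (hd.trans hdm)]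
  nlinarith

lemma one_sub_inv_rpow_le {d L : ℝ} (hd : 2 < d) (hL : 2 * d ≤ L * (d - 2)) :
    (1 - 1 / d) ^ L ≤ 1 - 2 / d := by
  have hd0 : 0 < d := by linarith
  have hL0 : 0 ≤ L := by nlinarith
  have hexp_inv : exp (-(L / d)) * (1 + L / d) ≤ 1 := by
    calc exp (-(L / d)) * (1 + L / d) ≤ exp (-(L / d)) * exp (L / d) := by
          gcongr; linarith [add_one_le_exp (L / d)]
      _ = 1 := by rw [← exp_add, neg_add_cancel, exp_zero]
  have hrat : 1 ≤ (1 - 2 / d) * (1 + L / d) := by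
    rw [← sub_nonneg]
    have : (1 - 2 / d) * (1 + L / d) - 1 = (L * (d - 2) - 2 * d) / d ^ 2 := by
      field_simp; ring
    rw [this]; apply div_nonneg <;> nlinarith
  calc (1 - 1 / d) ^ L ≤ exp (-(1 / d)) ^ L := by
        gcongr
        · rw [sub_nonneg, div_le_one hd0]; linarith
        · linarith [add_one_le_exp (-(1 / d))]
    _ = exp (-(L / d)) := by rw [← exp_mul]; congr 1; ring
    _ ≤ 1 - 2 / d := le_of_mul_le_mul_right (hexp_inv.trans hrat) (by positivity)

lemma rpow_natCast_div_le_of_pow_le {a x : ℝ} {p q : ℕ} (ha : 0 ≤ a) (hx : 0 ≤ x)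
    (hq : q ≠ 0) (h : a ^ p ≤ x ^ q) : a ^ ((p : ℝ) / q) ≤ x := by
  rw [div_eq_mul_inv, rpow_mul ha, rpow_natCast]
  calc (a ^ p) ^ (q⁻¹ : ℝ) ≤ (x ^ q) ^ (q⁻¹ : ℝ) := by gcongr
    _ = x := pow_rpow_inv_natCast hx hq

lemma le_rpow_natCast_div_of_pow_le {a x : ℝ} {p q : ℕ} (ha : 0 ≤ a) (hx : 0 ≤ x)
    (hq : q ≠ 0) (h : x ^ q ≤ a ^ p) : x ≤ a ^ ((p : ℝ) / q) := by
  rw [div_eq_mul_inv, rpow_mul ha, rpow_natCast]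
  calc x = (x ^ q) ^ (q⁻¹ : ℝ) := (pow_rpow_inv_natCast hx hq).symm
    _ ≤ (a ^ p) ^ (q⁻¹ : ℝ) := by gcongr

lemma natCast_div_le_logb_of_pow_le {b x : ℝ} {p q : ℕ} (hb : 1 < b) (hx : 0 < x)
    (hq : q ≠ 0) (h : b ^ p ≤ x ^ q) : (p : ℝ) / q ≤ logb b x := by
  rw [le_logb_iff_rpow_le hb hx]
  exact rpow_natCast_div_le_of_pow_le (by linarith) hx.le hq h

lemma kk_step {d m : ℝ} (hd : 2 ≤ d) (hdm : d ≤ m)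
    (hshrink : (1 - 1 / d) ^ logb 2 d ≤ 1 - 2 / d) :
    m ^ logb 2 (d - 1) + 2 * ((m - d) / 2) ^ logb 2 d + 2 ≤ m ^ logb 2 d := by
  set L := logb 2 d
  have hd0 : 0 < d := by linarith
  have hm0 : 0 < m := by linarith
  have hL1 : 1 ≤ L := by rw [le_logb_iff_rpow_le one_lt_two hd0, rpow_one]; exact hd
  have htwo_pow : (2 : ℝ) ^ L = d := rpow_logb two_pos (by norm_num) hd0
  have hfirst : m ^ logb 2 (d - 1) ≤ (1 - 2 / d) * m ^ L := by
    have hexp : logb 2 (d - 1) ≤ L :=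
      logb_le_logb_of_le one_lt_two (by linarith) (by linarith)
    have hswap : d ^ logb 2 (d - 1) = d ^ L * (1 - 1 / d) ^ L := by
      rw [rpow_logb_comm two_pos (by norm_num) hd0 (by linarith), ← mul_rpow hd0.le
        (by rw [sub_nonneg, div_le_one hd0]; linarith)]
      congr 1; field_simp
    have h := rpow_mul_rpow_le_of_le hd0 hdm hexp
    rw [hswap] at h
    refine le_of_mul_le_mul_right ?_ (rpow_pos_of_pos hd0 L)
    calc m ^ logb 2 (d - 1) * d ^ L ≤ m ^ L * (d ^ L * (1 - 1 / d) ^ L) := h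
      _ ≤ m ^ L * (d ^ L * (1 - 2 / d)) := by gcongr
      _ = (1 - 2 / d) * m ^ L * d ^ L := by ring
  have hsecond : 2 * ((m - d) / 2) ^ L ≤ 2 * m ^ L / d - 2 := by
    rw [div_rpow (by linarith) zero_le_two, htwo_pow]
    have hsub := sub_rpow_le hd0.le hdm hL1
    have hone : 1 ≤ m ^ (L - 1) := one_le_rpow (by linarith) (by linarith)
    calc 2 * ((m - d) ^ L / d) ≤ 2 * ((m ^ L - d * m ^ (L - 1)) / d) := by gcongr
      _ = 2 * m ^ L / d - 2 * m ^ (L - 1) := by field_simp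
      _ ≤ 2 * m ^ L / d - 2 := by linarith
  have hsum : (1 - 2 / d) * m ^ L + 2 * m ^ L / d = m ^ L := by field_simp; ring
  linarith

/- Here `(1 - 1/4) ^ 2 > 1 - 2/4`, so `kk_step` does not apply. Instead `m ^ log₂ 3` is
compared with `m ^ 2` through `4 ^ log₂ 3 = 9` for `m ≤ 8` and `8 ^ log₂ 3 = 27` beyond. -/
lemma kk_step_four {m : ℝ} (hm : 4 ≤ m) :
    m ^ logb 2 3 + 2 * ((m - 4) / 2) ^ logb 2 4 + 2 ≤ m ^ logb 2 4 := by
  have hlog4 : logb 2 (4 : ℝ) = 2 := by exact_mod_cast logb_two_pow 2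
  have hlog8 : logb 2 (8 : ℝ) = 3 := by exact_mod_cast logb_two_pow 3
  have hlog3 : logb 2 (3 : ℝ) ≤ 2 :=
    (logb_le_logb_of_le one_lt_two (by norm_num) (by norm_num : (3 : ℝ) ≤ 4)).trans hlog4.le
  rw [hlog4, rpow_two, rpow_two]
  rcases le_total m 8 with hm8 | hm8
  · have h := rpow_mul_rpow_le_of_le (by norm_num : (0 : ℝ) < 4) hm hlog3
    rw [rpow_logb_comm (a := 4) (c := 3) two_pos (by norm_num) (by norm_num) (by norm_num),
      hlog4, rpow_two, rpow_two] at h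
    nlinarith
  · have h := rpow_mul_rpow_le_of_le (by norm_num : (0 : ℝ) < 8) hm8 hlog3
    rw [rpow_logb_comm (a := 8) (c := 3) two_pos (by norm_num) (by norm_num) (by norm_num),
      hlog8, rpow_two] at h
    norm_num at h
    nlinarith

/- For `d = 5` the inequality is nearly sharp (`0.596 ≤ 0.6`), which is why `log₂ 5` is
bounded below by `23/10`. From `d = 7` on, `one_sub_inv_rpow_le` applies. -/
lemma one_sub_inv_rpow_logb_le (d : ℕ) (hd : 5 ≤ d) :
    (1 - 1 / (d : ℝ)) ^ logb 2 (d : ℝ) ≤ 1 - 2 / d := by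
  obtain rfl | rfl | hd7 : d = 5 ∨ d = 6 ∨ 7 ≤ d := by omega
  · have hlog : ((23 : ℕ) : ℝ) / (10 : ℕ) ≤ logb 2 5 :=
      natCast_div_le_logb_of_pow_le one_lt_two (by norm_num) (by norm_num) (by norm_num)
    norm_num only [Nat.cast_ofNat]
    calc (4 / 5 : ℝ) ^ logb 2 5 ≤ (4 / 5) ^ (((23 : ℕ) : ℝ) / (10 : ℕ)) :=
          rpow_le_rpow_of_exponent_ge (by norm_num) (by norm_num) hlog
      _ ≤ 3 / 5 :=
          rpow_natCast_div_le_of_pow_le (by norm_num) (by norm_num) (by norm_num) (by norm_num)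
  · have hlog : ((5 : ℕ) : ℝ) / (2 : ℕ) ≤ logb 2 6 :=
      natCast_div_le_logb_of_pow_le one_lt_two (by norm_num) (by norm_num) (by norm_num)
    norm_num only [Nat.cast_ofNat]
    calc (5 / 6 : ℝ) ^ logb 2 6 ≤ (5 / 6) ^ (((5 : ℕ) : ℝ) / (2 : ℕ)) :=
          rpow_le_rpow_of_exponent_ge (by norm_num) (by norm_num) hlog
      _ ≤ 2 / 3 :=
          rpow_natCast_div_le_of_pow_le (by norm_num) (by norm_num) (by norm_num) (by norm_num)
  · have hd7' : (7 : ℝ) ≤ d := by exact_mod_cast hd7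
    apply one_sub_inv_rpow_le (by linarith)
    obtain rfl | hd8 : d = 7 ∨ 8 ≤ d := by omega
    · have hlog : ((14 : ℕ) : ℝ) / (5 : ℕ) ≤ logb 2 7 :=
        natCast_div_le_logb_of_pow_le one_lt_two (by norm_num) (by norm_num) (by norm_num)
      norm_num at hlog ⊢
      linarith
    · have hlog : (3 : ℝ) ≤ logb 2 d := by
        rw [le_logb_iff_rpow_le one_lt_two (by positivity)]
        norm_num
        exact_mod_cast hd8
      nlinarith

lemma kk_step_of_four_le (d : ℕ) (hd : 4 ≤ d) {m : ℝ} (hdm : (d : ℝ) ≤ m) :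
    m ^ logb 2 ((d : ℝ) - 1) + 2 * ((m - d) / 2) ^ logb 2 (d : ℝ) + 2
      ≤ m ^ logb 2 (d : ℝ) := by
  obtain rfl | hd5 := eq_or_lt_of_le hd
  · norm_num at hdm ⊢
    exact kk_step_four hdm
  · exact kk_step (by exact_mod_cast hd.trans' (by norm_num)) hdm
      (one_sub_inv_rpow_logb_le d hd5)

section Recursion

variable {f : ℕ → ℕ → ℕ}

lemma apply_three_le_sub_rpow_logb
    (base2 : ∀ n, 2 ≤ n → f 2 n ≤ n / 2)
    (simplex : ∀ d, 3 ≤ d → f d d = 0)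
    (low : ∀ d n, 2 < d → d ≤ n → n < 2 * d → f d n ≤ f (d - 1) (n - 1))
    (kk : ∀ d n, 3 ≤ d → 2 * d ≤ n → f d n ≤ f (d - 1) (n - 1) + 2 * f d (n / 2) + 2)
    (lin : ∀ d n, 3 ≤ d → d ≤ n → f d n ≤ 2 ^ (d - 3) * n)
    (n : ℕ) (hn : 3 ≤ n) :
    (f 3 n : ℝ) ≤ ((n : ℝ) - 3) ^ logb 2 3 := by
  have hlog : ((3 : ℕ) : ℝ) / (2 : ℕ) ≤ logb 2 3 :=
    natCast_div_le_logb_of_pow_le one_lt_two (by norm_num) (by norm_num) (by norm_num)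
  obtain rfl | rfl | rfl | rfl | hn7 : n = 3 ∨ n = 4 ∨ n = 5 ∨ n = 6 ∨ 7 ≤ n := by omega
  · rw [simplex 3 le_rfl, Nat.cast_zero]
    exact rpow_nonneg (by norm_num) _
  · have h : f 3 4 ≤ 1 :=
      (low 3 4 (by norm_num) (by norm_num) (by norm_num)).trans (base2 3 (by norm_num))
    norm_num
    exact_mod_cast h
  · have h : f 3 5 ≤ 2 :=
      (low 3 5 (by norm_num) (by norm_num) (by norm_num)).trans (base2 4 (by norm_num))
    norm_num [rpow_logb]
    exact_mod_cast h.trans (by norm_num)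
  · have h : f 3 6 ≤ 4 := by
      have hkk := kk 3 6 le_rfl le_rfl
      norm_num [simplex 3 le_rfl] at hkk
      linarith [base2 5 (by norm_num)]
    calc (f 3 6 : ℝ) ≤ 4 := by exact_mod_cast h
      _ ≤ 3 ^ (((3 : ℕ) : ℝ) / (2 : ℕ)) :=
          le_rpow_natCast_div_of_pow_le (by norm_num) (by norm_num) (by norm_num) (by norm_num)
      _ ≤ 3 ^ logb 2 3 := rpow_le_rpow_of_exponent_le (by norm_num) hlog
      _ = ((6 : ℕ) - 3 : ℝ) ^ logb 2 3 := by norm_num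
  · have hn7' : 0 ≤ (n : ℝ) - 7 := by rw [sub_nonneg]; exact_mod_cast hn7
    calc (f 3 n : ℝ) ≤ n := by exact_mod_cast (lin 3 n le_rfl (by omega)).trans_eq (one_mul n)
      _ ≤ ((n : ℝ) - 3) ^ (((3 : ℕ) : ℝ) / (2 : ℕ)) :=
          le_rpow_natCast_div_of_pow_le (by linarith) (by linarith) (by norm_num)
            (by nlinarith [pow_nonneg hn7' 3, pow_nonneg hn7' 2])
      _ ≤ ((n : ℝ) - 3) ^ logb 2 3 := rpow_le_rpow_of_exponent_le (by linarith) hlog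

lemma apply_le_sub_rpow_logb
    (base2 : ∀ n, 2 ≤ n → f 2 n ≤ n / 2)
    (simplex : ∀ d, 3 ≤ d → f d d = 0)
    (low : ∀ d n, 2 < d → d ≤ n → n < 2 * d → f d n ≤ f (d - 1) (n - 1))
    (kk : ∀ d n, 3 ≤ d → 2 * d ≤ n → f d n ≤ f (d - 1) (n - 1) + 2 * f d (n / 2) + 2)
    (lin : ∀ d n, 3 ≤ d → d ≤ n → f d n ≤ 2 ^ (d - 3) * n)
    (n d : ℕ) (hd : 3 ≤ d) (hdn : d ≤ n) :
    (f d n : ℝ) ≤ ((n : ℝ) - d) ^ logb 2 (d : ℝ) := by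
  induction n using Nat.strong_induction_on generalizing d with
  | _ n ih =>
  obtain rfl | hd4 := eq_or_lt_of_le hd
  · exact_mod_cast apply_three_le_sub_rpow_logb base2 simplex low kk lin n hdn
  obtain rfl | hdn := eq_or_lt_of_le hdn
  · rw [simplex d hd, Nat.cast_zero]
    exact rpow_nonneg (sub_nonneg.2 le_rfl) _
  have hd4' : (4 : ℝ) ≤ d := by exact_mod_cast hd4
  have hnd : (1 : ℝ) ≤ n - d := by
    rw [le_sub_iff_add_le']; exact_mod_cast hdn
  have ih_dim : (f (d - 1) (n - 1) : ℝ) ≤ ((n : ℝ) - d) ^ logb 2 ((d : ℝ) - 1) := by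
    have h := ih (n - 1) (by omega) (d - 1) (by omega) (by omega)
    rwa [Nat.cast_sub (by omega : 1 ≤ n), Nat.cast_sub (by omega : 1 ≤ d), Nat.cast_one,
      sub_sub_sub_cancel_right] at h
  rcases lt_or_ge n (2 * d) with hlow | hkk
  · calc (f d n : ℝ) ≤ f (d - 1) (n - 1) := by exact_mod_cast low d n (by omega) hdn.le hlow
      _ ≤ ((n : ℝ) - d) ^ logb 2 ((d : ℝ) - 1) := ih_dim
      _ ≤ ((n : ℝ) - d) ^ logb 2 (d : ℝ) := rpow_le_rpow_of_exponent_le hnd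
          (logb_le_logb_of_le one_lt_two (by linarith) (by linarith))
  · have hhalf : ((n / 2 : ℕ) : ℝ) - d ≤ ((n : ℝ) - d - d) / 2 := by
      have := Nat.cast_div_le (α := ℝ) (m := n) (n := 2)
      push_cast at this
      linarith
    have ih_half : (f d (n / 2) : ℝ) ≤ (((n : ℝ) - d - d) / 2) ^ logb 2 (d : ℝ) :=
      (ih (n / 2) (by omega) d hd (by omega)).trans (rpow_le_rpow
        (by rw [sub_nonneg]; exact_mod_cast (by omega : d ≤ n / 2)) hhalf
        (logb_nonneg one_lt_two (by linarith)))
    have hdm : (d : ℝ) ≤ n - d := by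
      rw [le_sub_iff_add_le]; exact_mod_cast (by omega : d + d ≤ n)
    calc (f d n : ℝ) ≤ f (d - 1) (n - 1) + 2 * f d (n / 2) + 2 := by
          exact_mod_cast kk d n hd hkk
      _ ≤ ((n : ℝ) - d) ^ logb 2 ((d : ℝ) - 1)
            + 2 * (((n : ℝ) - d - d) / 2) ^ logb 2 (d : ℝ) + 2 := by gcongr
      _ ≤ ((n : ℝ) - d) ^ logb 2 (d : ℝ) := kk_step_of_four_le d hd4 hdm

end Recursion

/-- Tail-quasipolynomial bound for normal simplicial complexes: if `f`
satisfies the 2-dimensional base case `⌊n/2⌋`, the boundary base case, the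
low-vertex dimension reduction, the Kalai–Kleitman recursion, and the
Labbé–Manneville–Santos bound `2^(d-3) n`, then
`f d n ≤ (n - d) ^ log₂ d` for all `n > d ≥ 4`. -/
theorem normal_complexes_quasipolynomial_bound
    (f : ℕ → ℕ → ℕ)
    (base2 : ∀ n, 2 ≤ n → f 2 n ≤ n / 2)
    (simplex : ∀ d, 3 ≤ d → f d d = 0)
    (low : ∀ d n, 2 < d → d ≤ n → n < 2 * d → f d n ≤ f (d - 1) (n - 1))
    (kk : ∀ d n, 3 ≤ d → 2 * d ≤ n →
      f d n ≤ f (d - 1) (n - 1) + 2 * f d (n / 2) + 2)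
    (lin : ∀ d n, 3 ≤ d → d ≤ n → f d n ≤ 2 ^ (d - 3) * n) :
    ∀ d n, 4 ≤ d → d < n →
      (f d n : ℝ) ≤ ((n : ℝ) - (d : ℝ)) ^ (Real.logb 2 (d : ℝ)) := by
  intro d n hd hdn
  exact apply_le_sub_rpow_logb base2 simplex low kk lin n d (by omega) hdn.le
end

section
/- Let f : ℕ → ℕ → ℕ satisfy (KK) f d n ≤ f (d−1) (n−1) + 2·f d (n/2) + 2 whenever d ≥ 3 and n ≥ 2d, (LOW) f d n ≤ f (d−1) (n−1) whenever 3 ≤ d ≤ n < 2d, and (REMOVE) f (d−1) (n−1) + 1 ≤ f (d−1) n whenever n ≥ d ≥ 3. Then for every d ≥ 3, every integer k ≥ 0, and every n with d·2^k ≤ n < d·2^(k+1), one has f d n + 1 ≤ Σ_{i=0}^{k} 2^i · f (d−1) (n / 2^i). -/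
/-- Iterated Kalai–Kleitman inequality: if `f` satisfies (KK), (LOW) and the
facet-removal inequality (REMOVE), then for `d ≥ 3`, `k ≥ 0` and
`d·2^k ≤ n < d·2^(k+1)` one has
`f d n + 1 ≤ Σ_{i=0}^{k} 2^i · f (d-1) (n / 2^i)`. -/
theorem iterated_kalai_kleitman
    (f : ℕ → ℕ → ℕ)
    (kk : ∀ d n, 3 ≤ d → 2 * d ≤ n →
      f d n ≤ f (d - 1) (n - 1) + 2 * f d (n / 2) + 2)
    (low : ∀ d n, 3 ≤ d → d ≤ n → n < 2 * d → f d n ≤ f (d - 1) (n - 1))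
    (remove : ∀ d n, 3 ≤ d → d ≤ n → f (d - 1) (n - 1) + 1 ≤ f (d - 1) n) :
    ∀ d k n, 3 ≤ d → d * 2 ^ k ≤ n → n < d * 2 ^ (k + 1) →
      f d n + 1 ≤ ∑ i ∈ Finset.range (k + 1), 2 ^ i * f (d - 1) (n / 2 ^ i) := by
  intro d k
  induction k with
  | zero =>
    intro n hd h1 h2
    simp only [zero_add, pow_zero, pow_one, mul_one] at h1 h2
    simp only [zero_add, Finset.sum_range_one, pow_zero, one_mul, Nat.div_one]
    have hl := low d n hd h1 (by omega)
    have hr := remove d n hd h1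
    omega
  | succ k ih =>
    intro n hd h1 h2
    have h2d : 2 * d ≤ n := by
      have : d * 2 ^ 1 ≤ d * 2 ^ (k + 1) :=
        Nat.mul_le_mul_left d (Nat.pow_le_pow_right (by norm_num) (by omega))
      simp [pow_one] at this; omega
    have hkk := kk d n hd h2d
    have hlow1 : d * 2 ^ k ≤ n / 2 := by
      rw [Nat.le_div_iff_mul_le (by norm_num)]
      calc d * 2 ^ k * 2 = d * 2 ^ (k + 1) := by ring
        _ ≤ n := h1
    have hlow2 : n / 2 < d * 2 ^ (k + 1) := by
      rw [Nat.div_lt_iff_lt_mul (by norm_num)]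
      calc n < d * 2 ^ (k + 1 + 1) := h2
        _ = d * 2 ^ (k + 1) * 2 := by ring
    have hih := ih (n / 2) hd hlow1 hlow2
    have heq : ∀ i, n / 2 / 2 ^ i = n / 2 ^ (i + 1) := by
      intro i
      rw [Nat.div_div_eq_div_mul, pow_succ']
    simp only [heq] at hih
    have hrem := remove d n hd (by omega)
    rw [Finset.sum_range_succ']
    simp only [pow_zero, one_mul, Nat.div_one]
    have h2sum : 2 * ∑ i ∈ Finset.range (k + 1), 2 ^ i * f (d - 1) (n / 2 ^ (i + 1))
        = ∑ i ∈ Finset.range (k + 1), 2 ^ (i + 1) * f (d - 1) (n / 2 ^ (i + 1)) := by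
      rw [Finset.mul_sum]
      refine Finset.sum_congr rfl fun i _ => by ring
    calc f d n + 1 ≤ (f (d - 1) (n - 1) + 1) + 2 * (f d (n / 2) + 1) := by omega
      _ ≤ f (d - 1) n + 2 * ∑ i ∈ Finset.range (k + 1), 2 ^ i * f (d - 1) (n / 2 ^ (i + 1)) :=
        Nat.add_le_add hrem (Nat.mul_le_mul_left 2 hih)
      _ = ∑ i ∈ Finset.range (k + 1), 2 ^ (i + 1) * f (d - 1) (n / 2 ^ (i + 1)) + f (d - 1) n := by
        rw [h2sum]; ring
end

section
/- Let f : ℕ → ℕ → ℕ satisfy (KK) f d n ≤ f (d−1) (n−1) + 2·f d (n/2) + 2 whenever d ≥ 3 and n ≥ 2d, (LOW) f d n ≤ f (d−1) (n−1) whenever 3 ≤ d ≤ n < 2d, and (REMOVE) f (d−1) (n−1) + 1 ≤ f (d−1) n whenever n ≥ d ≥ 3. Then for all n ≥ d ≥ 3, one has f d n + 1 ≤ Σ_{i=0}^{K} 2^i · f (d−1) (n / 2^i), where K = ⌊log₂(n/d)⌋ (the base-2 integer logarithm of n/d). -/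
/-- Iterated Kalai–Kleitman inequality with `K = ⌊log₂(n/d)⌋`:
for all `n ≥ d ≥ 3`,
`f d n + 1 ≤ Σ_{i=0}^{⌊log₂(n/d)⌋} 2^i · f (d-1) (n / 2^i)`. -/
theorem iterated_kalai_kleitman_log
    (f : ℕ → ℕ → ℕ)
    (kk : ∀ d n, 3 ≤ d → 2 * d ≤ n →
      f d n ≤ f (d - 1) (n - 1) + 2 * f d (n / 2) + 2)
    (low : ∀ d n, 3 ≤ d → d ≤ n → n < 2 * d → f d n ≤ f (d - 1) (n - 1))
    (remove : ∀ d n, 3 ≤ d → d ≤ n → f (d - 1) (n - 1) + 1 ≤ f (d - 1) n) :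
    ∀ d n, 3 ≤ d → d ≤ n →
      f d n + 1 ≤
        ∑ i ∈ Finset.range (Nat.log 2 (n / d) + 1),
          2 ^ i * f (d - 1) (n / 2 ^ i) := by
  intro d n hd
  induction n using Nat.strong_induction_on with
  | _ n ih =>
    intro hn
    by_cases h2 : n < 2 * d
    · have hnd : n / d = 1 := by
        apply Nat.div_eq_of_lt_le <;> omega
      have hlow := low d n hd hn h2
      have hrem := remove d n hd hn
      rw [hnd]
      simp only [Nat.log_one_right, zero_add, Finset.sum_range_one, pow_zero, one_mul, Nat.div_one]
      omega
    · push_neg at h2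
      have hn2 : n / 2 < n := Nat.div_lt_self (by omega) (by omega)
      have hdn2 : d ≤ n / 2 := (Nat.le_div_iff_mul_le (by norm_num)).mpr (by omega)
      have ih2 := ih (n / 2) hn2 hdn2
      have hkk := kk d n hd h2
      have hrem := remove d n hd hn
      have hnd2 : 2 ≤ n / d := (Nat.le_div_iff_mul_le (by omega)).mpr (by omega)
      have hdd : n / d / 2 = n / 2 / d := by
        rw [Nat.div_div_eq_div_mul, Nat.div_div_eq_div_mul, Nat.mul_comm]
      have hlog : Nat.log 2 (n / d) = Nat.log 2 (n / 2 / d) + 1 := by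
        rw [← hdd, Nat.log_div_base]
        have := Nat.log_pos (b := 2) (by norm_num) hnd2
        omega
      rw [hlog, Finset.sum_range_succ']
      have hsum : ∑ i ∈ Finset.range (Nat.log 2 (n / 2 / d) + 1),
          2 ^ (i + 1) * f (d - 1) (n / 2 ^ (i + 1)) =
          2 * ∑ i ∈ Finset.range (Nat.log 2 (n / 2 / d) + 1),
          2 ^ i * f (d - 1) (n / 2 / 2 ^ i) := by
        rw [Finset.mul_sum]
        apply Finset.sum_congr rfl
        intro i _
        rw [Nat.div_div_eq_div_mul]
        ring_nf
      rw [hsum]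
      simp only [pow_zero, one_mul, Nat.div_one]
      omega
end

section
/- Let f : ℕ → ℕ → ℕ satisfy (KK) f d n ≤ f (d−1) (n−1) + 2·f d (n/2) + 2 whenever d ≥ 3 and n ≥ 2d, (LOW) f d n ≤ f (d−1) (n−1) whenever 3 ≤ d ≤ n < 2d, (REMOVE) f (d−1) (n−1) + 1 ≤ f (d−1) n whenever n ≥ d ≥ 3, and (BASE3) f 3 n ≤ n − 3 for all n ≥ 3. Then for all n ≥ d ≥ 3, f d n ≤ (n − 3) · C(⌊log₂(n/4)⌋ + d − 3, ⌊log₂(n/4)⌋). -/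
lemma choose_shift_mono {L' L : ℕ} (m : ℕ) (h : L' ≤ L) :
    Nat.choose (L' + m) L' ≤ Nat.choose (L + m) L := by
  rw [Nat.choose_symm_add, Nat.choose_symm_add]
  exact Nat.choose_le_choose m (by omega)

/-- Binomial-coefficient diameter bound for polyhedra: for all `n ≥ d ≥ 3`,
`f d n ≤ (n - 3) · C(⌊log₂(n/4)⌋ + d - 3, ⌊log₂(n/4)⌋)`. -/
theorem binomial_bound_polyhedra
    (f : ℕ → ℕ → ℕ)
    (kk : ∀ d n, 3 ≤ d → 2 * d ≤ n →
      f d n ≤ f (d - 1) (n - 1) + 2 * f d (n / 2) + 2)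
    (low : ∀ d n, 3 ≤ d → d ≤ n → n < 2 * d → f d n ≤ f (d - 1) (n - 1))
    (remove : ∀ d n, 3 ≤ d → d ≤ n → f (d - 1) (n - 1) + 1 ≤ f (d - 1) n)
    (base3 : ∀ n, 3 ≤ n → f 3 n ≤ n - 3) :
    ∀ d n, 3 ≤ d → d ≤ n →
      f d n ≤ (n - 3) * Nat.choose (Nat.log 2 (n / 4) + d - 3) (Nat.log 2 (n / 4)) := by
  have key : ∀ k d n, d + n ≤ k → 3 ≤ d → d ≤ n →
      f d n ≤ (n - 3) * Nat.choose (Nat.log 2 (n / 4) + d - 3) (Nat.log 2 (n / 4)) := by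
    intro k
    induction k with
    | zero => intro d n h hd hn; omega
    | succ k ih =>
      intro d n hk hd hn
      set L := Nat.log 2 (n / 4) with hL
      rcases eq_or_lt_of_le hd with h3 | h4
      · -- d = 3
        subst h3
        have : L + 3 - 3 = L := by omega
        rw [this, Nat.choose_self, mul_one]
        exact base3 n hn
      · -- d ≥ 4
        have hd4 : 4 ≤ d := h4
        have hL1 : Nat.log 2 ((n - 1) / 4) ≤ L :=
          Nat.log_mono_right (Nat.div_le_div_right (by omega))
        -- bound for f (d-1) (n-1)
        have hA : f (d - 1) (n - 1) ≤
            (n - 4) * Nat.choose (L + (d - 4)) L := by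
          have h1 := ih (d - 1) (n - 1) (by omega) (by omega) (by omega)
          have h2 : Nat.log 2 ((n - 1) / 4) + (d - 1) - 3 =
              Nat.log 2 ((n - 1) / 4) + (d - 4) := by omega
          rw [h2] at h1
          calc f (d - 1) (n - 1) ≤ (n - 1 - 3) *
                Nat.choose (Nat.log 2 ((n - 1) / 4) + (d - 4)) (Nat.log 2 ((n - 1) / 4)) := h1
            _ ≤ (n - 4) * Nat.choose (L + (d - 4)) L := by
                have := choose_shift_mono (L' := Nat.log 2 ((n - 1) / 4)) (L := L) (d - 4) hL1
                have h3 : n - 1 - 3 = n - 4 := by omega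
                rw [h3]
                exact Nat.mul_le_mul_left _ this
        by_cases hcase : n < 2 * d
        · -- low case
          have h1 := low d n (by omega) hn hcase
          have h2 : Nat.choose (L + (d - 4)) L ≤ Nat.choose (L + d - 3) L := by
            have : L + (d - 4) ≤ L + d - 3 := by omega
            exact Nat.choose_le_choose L this
          calc f d n ≤ f (d - 1) (n - 1) := h1
            _ ≤ (n - 4) * Nat.choose (L + (d - 4)) L := hA
            _ ≤ (n - 3) * Nat.choose (L + d - 3) L :=
                Nat.mul_le_mul (by omega) h2
        · -- KK case
          push_neg at hcase
          have hn8 : 8 ≤ n := by omega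
          have hLpos : 1 ≤ L := Nat.log_pos (by norm_num) (by omega)
          obtain ⟨M, hM⟩ : ∃ M, L = M + 1 := ⟨L - 1, by omega⟩
          -- L₂ = M
          have hL2 : Nat.log 2 (n / 2 / 4) = M := by
            have e1 : n / 2 / 4 = n / 4 / 2 := by
              rw [Nat.div_div_eq_div_mul, Nat.div_div_eq_div_mul]
            rw [e1, Nat.log_div_base]
            omega
          -- bound for f d (n/2)
          have hdn2 : d ≤ n / 2 := by omega
          have hB : f d (n / 2) ≤ (n / 2 - 3) * Nat.choose (M + (d - 3)) M := by
            have h1 := ih d (n / 2) (by omega) (by omega) hdn2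
            rwa [hL2, show M + d - 3 = M + (d - 3) by omega] at h1
          have h0 := kk d n (by omega) hcase
          -- Pascal
          have hPascal : Nat.choose (L + d - 3) L =
              Nat.choose (M + (d - 3)) M + Nat.choose (M + (d - 3)) (M + 1) := by
            have e1 : L + d - 3 = (M + (d - 3)) + 1 := by omega
            rw [e1, hM, Nat.choose_succ_succ]
          set P := Nat.choose (M + (d - 3)) (M + 1) with hP
          set Q := Nat.choose (M + (d - 3)) M with hQ
          have hPpos : 1 ≤ P := Nat.choose_pos (by omega)
          have hQpos : 1 ≤ Q := Nat.choose_pos (by omega)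
          have hA' : f (d - 1) (n - 1) ≤ (n - 4) * P := by
            have e : Nat.choose (L + (d - 4)) L = P := by
              rw [hM, hP]
              congr 1
              omega
            rwa [e] at hA
          have hhalf : 2 * (n / 2 - 3) ≤ n - 6 := by omega
          calc f d n ≤ f (d - 1) (n - 1) + 2 * f d (n / 2) + 2 := h0
            _ ≤ (n - 4) * P + 2 * ((n / 2 - 3) * Q) + 2 :=
                add_le_add (add_le_add hA' (Nat.mul_le_mul_left 2 hB)) le_rfl
            _ = (n - 4) * P + (2 * (n / 2 - 3)) * Q + 2 := by ring
            _ ≤ (n - 4) * P + (n - 6) * Q + 2 :=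
                add_le_add (add_le_add le_rfl (Nat.mul_le_mul_right Q hhalf)) le_rfl
            _ ≤ (n - 3) * (Q + P) := by
                have e1 : n - 3 = (n - 4) + 1 := by omega
                have e2 : n - 3 = (n - 6) + 3 := by omega
                calc (n - 4) * P + (n - 6) * Q + 2
                    ≤ (n - 4) * P + (n - 6) * Q + (P + 3 * Q) := by
                      have : 2 ≤ P + 3 * Q := by omega
                      omega
                  _ = ((n - 4) + 1) * P + ((n - 6) + 3) * Q := by ring
                  _ = (n - 3) * P + (n - 3) * Q := by rw [← e1, ← e2]
                  _ = (n - 3) * (Q + P) := by ring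
            _ = (n - 3) * Nat.choose (L + d - 3) L := by rw [hPascal]
  intro d n hd hn
  exact key (d + n) d n le_rfl hd hn
end

section
/- Let f : ℕ → ℕ → ℕ satisfy (KK) f d n ≤ f (d−1) (n−1) + 2·f d (n/2) + 2 whenever d ≥ 3 and n ≥ 2d, (LOW) f d n ≤ f (d−1) (n−1) whenever 3 ≤ d ≤ n < 2d, (REMOVE) f (d−1) (n−1) + 1 ≤ f (d−1) n whenever n ≥ d ≥ 3, and (BASE3) f 3 n ≤ n − 3 for all n ≥ 3. Then for all d ≥ 3 and all n ≥ 2^(d−1), (f d n : ℝ) ≤ (1/16) · n³ / √(3·log₂ n − 5). -/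
/-!
Strong induction on `n` shows `f d n ≤ C(d - 3 + ⌊log₂ n⌋ - 2, d - 3) · (n - d)`: lowering `d`
keeps `⌊log₂ n⌋` and halving `n` lowers it by one, so Pascal's rule absorbs the two recursive
terms of (KK). Propagating `C(2m, m)² (3m + 1) ≤ 16^m` gives `C(a + s, a)² (3a + 1) ≤ 4^(a + s)`
for `a ≤ s`, and since `√(3x + 1) / 2^x` decreases for `x ≥ 2/3`, the resulting factor
`1 / √(3(d - 3) + 1)` can be traded for `1 / √(3 log₂ n - 5)`. For `d = 3` the bound is a
polynomial inequality.
-/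

open Real

namespace Nat

theorem centralBinom_sq_mul_le (m : ℕ) : centralBinom m ^ 2 * (3 * m + 1) ≤ 16 ^ m := by
  induction m with
  | zero => simp
  | succ m ih =>
    have key : (2 * m + 1) ^ 2 * (3 * m + 4) ≤ 4 * ((m + 1) ^ 2 * (3 * m + 1)) := by nlinarith
    refine Nat.le_of_mul_le_mul_left ?_ (by positivity : 0 < (m + 1) ^ 2 * (3 * m + 1))
    calc (m + 1) ^ 2 * (3 * m + 1) * (centralBinom (m + 1) ^ 2 * (3 * (m + 1) + 1))
        = (3 * m + 1) * (3 * m + 4) * ((m + 1) * centralBinom (m + 1)) ^ 2 := by ring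
      _ = (2 * m + 1) ^ 2 * (3 * m + 4) * (4 * (centralBinom m ^ 2 * (3 * m + 1))) := by
          rw [succ_mul_centralBinom_succ]; ring
      _ ≤ 4 * ((m + 1) ^ 2 * (3 * m + 1)) * (4 * 16 ^ m) := by gcongr
      _ = (m + 1) ^ 2 * (3 * m + 1) * 16 ^ (m + 1) := by ring

theorem choose_succ_add_le_two_mul {a s : ℕ} (h : a ≤ s) :
    (a + s + 1).choose a ≤ 2 * (a + s).choose a := by
  have := choose_mul_succ_eq (a + s) a
  rw [show a + s + 1 - a = s + 1 by omega] at this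
  nlinarith

theorem choose_add_sq_mul_le {a s : ℕ} (h : a ≤ s) :
    (a + s).choose a ^ 2 * (3 * a + 1) ≤ 4 ^ (a + s) := by
  induction s, h using Nat.le_induction with
  | base =>
    simpa [← two_mul, ← centralBinom_eq_two_mul_choose, pow_mul] using centralBinom_sq_mul_le a
  | succ s hs ih =>
    calc (a + (s + 1)).choose a ^ 2 * (3 * a + 1)
        ≤ (2 * (a + s).choose a) ^ 2 * (3 * a + 1) := by
          gcongr; exact choose_succ_add_le_two_mul hs
      _ = 4 * ((a + s).choose a ^ 2 * (3 * a + 1)) := by ring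
      _ ≤ 4 * 4 ^ (a + s) := by gcongr
      _ = 4 ^ (a + (s + 1)) := by ring

end Nat

theorem choose_mul_sqrt_le_two_pow {a s : ℕ} (h : a ≤ s) :
    ((a + s).choose a : ℝ) * √(3 * a + 1) ≤ 2 ^ (a + s) := by
  rw [← sqrt_sq (by positivity : (0 : ℝ) ≤ (a + s).choose a), ← sqrt_mul (sq_nonneg _),
    ← sqrt_sq (by positivity : (0 : ℝ) ≤ 2 ^ (a + s))]
  refine sqrt_le_sqrt ?_
  calc ((a + s).choose a : ℝ) ^ 2 * (3 * a + 1) ≤ 4 ^ (a + s) := by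
        exact_mod_cast Nat.choose_add_sq_mul_le h
    _ = (2 ^ (a + s)) ^ 2 := by rw [← pow_mul, mul_comm, pow_mul]; norm_num

theorem two_rpow_mul_sqrt_le {a x : ℝ} (ha : 2 ≤ 3 * a) (hax : a ≤ x) :
    2 ^ a * √(3 * x + 1) ≤ 2 ^ x * √(3 * a + 1) := by
  obtain ⟨u, hu, rfl⟩ : ∃ u, 0 ≤ u ∧ x = a + u := ⟨x - a, by linarith, by ring⟩
  have hexp : 1 + u ≤ (2 ^ u) ^ 2 := by
    rw [← rpow_natCast, ← rpow_mul zero_le_two, rpow_def_of_pos two_pos]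
    have := add_one_le_exp (log 2 * (u * (2 : ℕ)))
    have := log_two_gt_d9
    push_cast at *
    nlinarith
  have hsqrt : √(3 * (a + u) + 1) ≤ 2 ^ u * √(3 * a + 1) := by
    rw [← sqrt_sq (rpow_nonneg zero_le_two u), ← sqrt_mul (sq_nonneg _)]
    exact sqrt_le_sqrt (by nlinarith)
  calc 2 ^ a * √(3 * (a + u) + 1) ≤ 2 ^ a * (2 ^ u * √(3 * a + 1)) := by gcongr
    _ = 2 ^ (a + u) * √(3 * a + 1) := by rw [rpow_add two_pos]; ring

theorem sixteen_mul_sub_three_mul_sqrt_le {x : ℝ} (hx : 4 ≤ x) :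
    16 * (x - 3) * √(3 * logb 2 x - 5) ≤ x ^ 3 := by
  have hlogb : logb 2 x ≤ x := by
    rw [logb_le_iff_le_rpow one_lt_two (by linarith)]
    have := one_add_mul_self_le_rpow_one_add (show (-1 : ℝ) ≤ 1 by norm_num)
      (show 1 ≤ x by linarith)
    norm_num at this
    linarith
  have hpoly : 256 * (x - 3) ^ 2 * (3 * x - 5) ≤ (x ^ 3) ^ 2 := by
    nlinarith [sq_nonneg (x - 4), mul_nonneg (sub_nonneg.2 hx) (sq_nonneg (x ^ 2 - 16))]
  calc 16 * (x - 3) * √(3 * logb 2 x - 5) ≤ 16 * (x - 3) * √(3 * x - 5) := by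
        gcongr; linarith
    _ ≤ x ^ 3 := by
        rw [← pow_le_pow_iff_left₀ (by nlinarith [sqrt_nonneg (3 * x - 5)]) (by positivity)
          two_ne_zero, mul_pow, sq_sqrt (by linarith)]
        linarith

def kalaiKleitmanBound (d n : ℕ) : ℕ := (d - 3 + (Nat.log 2 n - 2)).choose (d - 3) * (n - d)

theorem kalaiKleitmanBound_three (n : ℕ) : kalaiKleitmanBound 3 n = n - 3 := by
  simp [kalaiKleitmanBound]

theorem kalaiKleitmanBound_pred_le {d : ℕ} (hd : 4 ≤ d) (n : ℕ) :
    kalaiKleitmanBound (d - 1) (n - 1) ≤ kalaiKleitmanBound d n := by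
  obtain ⟨e, rfl⟩ : ∃ e, d = e + 4 := ⟨d - 4, by omega⟩
  have hlog : Nat.log 2 (n - 1) ≤ Nat.log 2 n := Nat.log_mono_right (by omega)
  simp only [kalaiKleitmanBound, show e + 4 - 1 - 3 = e by omega,
    show e + 4 - 3 = e + 1 by omega, show n - 1 - (e + 4 - 1) = n - (e + 4) by omega]
  refine Nat.mul_le_mul_right _ ?_
  calc (e + (Nat.log 2 (n - 1) - 2)).choose e ≤ (e + (Nat.log 2 n - 2)).choose e :=
        Nat.choose_le_choose _ (by omega)
    _ ≤ (e + 1 + (Nat.log 2 n - 2)).choose (e + 1) := by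
        rw [add_right_comm, Nat.choose_succ_succ]; exact Nat.le_add_right _ _

theorem kalaiKleitmanBound_recursion_le {d n : ℕ} (hd : 4 ≤ d) (hdn : 2 * d ≤ n) :
    kalaiKleitmanBound (d - 1) (n - 1) + 2 * kalaiKleitmanBound d (n / 2) + 2 ≤
      kalaiKleitmanBound d n := by
  obtain ⟨e, rfl⟩ : ∃ e, d = e + 4 := ⟨d - 4, by omega⟩
  obtain ⟨L, hL⟩ : ∃ L, Nat.log 2 n = L + 3 := ⟨Nat.log 2 n - 3, by
    have := Nat.le_log_of_pow_le (x := 3) (y := n) one_lt_two (by norm_num; omega); omega⟩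
  set A := (e + (L + 1)).choose e
  set B := (e + (L + 1)).choose (e + 1)
  have hpred : kalaiKleitmanBound (e + 4 - 1) (n - 1) ≤ A * (n - (e + 4)) := by
    have : Nat.log 2 (n - 1) ≤ Nat.log 2 n := Nat.log_mono_right (by omega)
    simp only [kalaiKleitmanBound, show e + 4 - 1 - 3 = e by omega,
      show n - 1 - (e + 4 - 1) = n - (e + 4) by omega]
    exact Nat.mul_le_mul_right _ (Nat.choose_le_choose _ (by omega))
  have hhalf : kalaiKleitmanBound (e + 4) (n / 2) = B * (n / 2 - (e + 4)) := by
    simp only [kalaiKleitmanBound, Nat.log_div_base, hL, B]; congr 2; omega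
  have hfull : kalaiKleitmanBound (e + 4) n = (A + B) * (n - (e + 4)) := by
    simp only [kalaiKleitmanBound, hL, A, B, ← Nat.choose_succ_succ]; congr 2; omega
  have hB : 1 ≤ B := Nat.choose_pos (by omega)
  have hn2 : 2 * (n / 2) ≤ n := Nat.mul_div_le n 2
  have hhalf_le : 2 * (B * (n / 2 - (e + 4))) + 2 ≤ B * (n - (e + 4)) :=
    calc 2 * (B * (n / 2 - (e + 4))) + 2 ≤ B * (2 * (n / 2 - (e + 4)) + (e + 4)) := by nlinarith
      _ ≤ B * (n - (e + 4)) := Nat.mul_le_mul_left _ (by omega)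
  rw [hhalf, hfull, add_mul]
  omega

theorem le_kalaiKleitmanBound (f : ℕ → ℕ → ℕ)
    (kk : ∀ d n, 3 ≤ d → 2 * d ≤ n → f d n ≤ f (d - 1) (n - 1) + 2 * f d (n / 2) + 2)
    (low : ∀ d n, 3 ≤ d → d ≤ n → n < 2 * d → f d n ≤ f (d - 1) (n - 1))
    (base3 : ∀ n, 3 ≤ n → f 3 n ≤ n - 3) {d n : ℕ} (hd : 3 ≤ d) (hdn : d ≤ n) :
    f d n ≤ kalaiKleitmanBound d n := by
  induction n using Nat.strong_induction_on generalizing d with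
  | _ n ih =>
  obtain rfl | hd4 := hd.eq_or_lt
  · simpa [kalaiKleitmanBound_three] using base3 n hdn
  have ih_pred : f (d - 1) (n - 1) ≤ kalaiKleitmanBound (d - 1) (n - 1) :=
    ih (n - 1) (by omega) (by omega) (by omega)
  by_cases hkk : 2 * d ≤ n
  · have ih_half : f d (n / 2) ≤ kalaiKleitmanBound d (n / 2) :=
      ih (n / 2) (by omega) hd (by omega)
    calc f d n ≤ f (d - 1) (n - 1) + 2 * f d (n / 2) + 2 := kk d n hd hkk
      _ ≤ kalaiKleitmanBound (d - 1) (n - 1) + 2 * kalaiKleitmanBound d (n / 2) + 2 := by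
          gcongr
      _ ≤ kalaiKleitmanBound d n := kalaiKleitmanBound_recursion_le hd4 hkk
  · calc f d n ≤ f (d - 1) (n - 1) := low d n hd hdn (by omega)
      _ ≤ kalaiKleitmanBound (d - 1) (n - 1) := ih_pred
      _ ≤ kalaiKleitmanBound d n := kalaiKleitmanBound_pred_le hd4 n

theorem sixteen_mul_kalaiKleitmanBound_mul_sqrt_le_of_four_le {d n : ℕ} (hd : 4 ≤ d)
    (hn : 2 ^ (d - 1) ≤ n) :
    16 * (kalaiKleitmanBound d n : ℝ) * √(3 * logb 2 n - 5) ≤ n ^ 3 := by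
  set a := d - 3
  set t := Nat.log 2 n
  have hat : a + 2 ≤ t := by have := Nat.le_log_of_pow_le one_lt_two hn; omega
  have hn1 : 1 ≤ n := Nat.one_le_two_pow.trans hn
  have hn0 : (0 : ℝ) < n := by exact_mod_cast hn1
  have htn : (2 : ℝ) ^ t ≤ n := by exact_mod_cast Nat.pow_log_le_self 2 (by omega)
  have hdn : ((n - d : ℕ) : ℝ) ≤ n := by exact_mod_cast Nat.sub_le n d
  have htlog : (t : ℝ) ≤ logb 2 n := natLog_le_logb n 2
  have hpow_log : (2 : ℝ) ^ (logb 2 n - 2) = n / 4 := by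
    rw [rpow_sub two_pos, rpow_logb two_pos (by norm_num) hn0]; norm_num
  have hchoose := choose_mul_sqrt_le_two_pow (show a ≤ t - 2 by omega)
  have ha1 : (1 : ℝ) ≤ a := by exact_mod_cast (show 1 ≤ a by omega)
  have hat' : (a : ℝ) + 2 ≤ t := by exact_mod_cast hat
  have hdecay := two_rpow_mul_sqrt_le (a := a) (x := logb 2 n - 2) (by linarith) (by linarith)
  rw [rpow_natCast, hpow_log, show 3 * (logb 2 n - 2) + 1 = 3 * logb 2 n - 5 by ring] at hdecay
  have h2t : (2 : ℝ) ^ a * 2 ^ t = 4 * 2 ^ (a + (t - 2)) := by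
    rw [← pow_add, show a + t = a + (t - 2) + 2 by omega, pow_add]; ring
  refine le_of_mul_le_mul_right ?_ (by positivity : (0 : ℝ) < 2 ^ a)
  calc 16 * (kalaiKleitmanBound d n : ℝ) * √(3 * logb 2 n - 5) * 2 ^ a
      = 16 * ((a + (t - 2)).choose a * (n - d : ℕ)) * (2 ^ a * √(3 * logb 2 n - 5)) := by
        simp only [kalaiKleitmanBound, Nat.cast_mul]; ring
    _ ≤ 16 * ((a + (t - 2)).choose a * (n - d : ℕ)) * (n / 4 * √(3 * a + 1)) := by gcongr
    _ = 4 * n * (n - d : ℕ) * ((a + (t - 2)).choose a * √(3 * a + 1)) := by ring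
    _ ≤ 4 * n * (n - d : ℕ) * 2 ^ (a + (t - 2)) := by gcongr
    _ = n * (n - d : ℕ) * 2 ^ t * 2 ^ a := by linear_combination -(n * (n - d : ℕ) : ℝ) * h2t
    _ ≤ n * n * n * 2 ^ a := by gcongr
    _ = n ^ 3 * 2 ^ a := by ring

theorem sixteen_mul_kalaiKleitmanBound_mul_sqrt_le {d n : ℕ} (hd : 3 ≤ d)
    (hn : 2 ^ (d - 1) ≤ n) :
    16 * (kalaiKleitmanBound d n : ℝ) * √(3 * logb 2 n - 5) ≤ n ^ 3 := by
  obtain rfl | hd4 := hd.eq_or_lt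
  · have hn4 : (4 : ℝ) ≤ n := by exact_mod_cast hn
    simpa [kalaiKleitmanBound_three, Nat.cast_sub (show 3 ≤ n by omega)] using
      sixteen_mul_sub_three_mul_sqrt_le hn4
  · exact sixteen_mul_kalaiKleitmanBound_mul_sqrt_le_of_four_le hd4 hn

theorem tail_cubic_bound_general
    (f : ℕ → ℕ → ℕ)
    (kk : ∀ d n, 3 ≤ d → 2 * d ≤ n →
      f d n ≤ f (d - 1) (n - 1) + 2 * f d (n / 2) + 2)
    (low : ∀ d n, 3 ≤ d → d ≤ n → n < 2 * d → f d n ≤ f (d - 1) (n - 1))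
    (base3 : ∀ n, 3 ≤ n → f 3 n ≤ n - 3) :
    ∀ d n, 3 ≤ d → 2 ^ (d - 1) ≤ n →
      (f d n : ℝ) ≤
        (1 / 16) * (n : ℝ) ^ 3 / Real.sqrt (3 * Real.logb 2 (n : ℝ) - 5) := by
  intro d n hd hn
  have hdn : d ≤ n := by have := Nat.lt_two_pow_self (n := d - 1); omega
  have hlog : ((d - 1 : ℕ) : ℝ) ≤ logb 2 n :=
    (Nat.cast_le.2 (Nat.le_log_of_pow_le one_lt_two hn)).trans (natLog_le_logb n 2)
  have hd2 : (2 : ℝ) ≤ (d - 1 : ℕ) := by exact_mod_cast (show 2 ≤ d - 1 by omega)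
  have hf : (f d n : ℝ) ≤ kalaiKleitmanBound d n := by
    exact_mod_cast le_kalaiKleitmanBound f kk low base3 hd hdn
  rw [le_div_iff₀ (sqrt_pos.2 (by linarith))]
  calc (f d n : ℝ) * √(3 * logb 2 n - 5) ≤ kalaiKleitmanBound d n * √(3 * logb 2 n - 5) := by
        gcongr
    _ ≤ 1 / 16 * n ^ 3 := by linarith [sixteen_mul_kalaiKleitmanBound_mul_sqrt_le hd hn]

/-- Tail-cubic bound for polyhedra: for `d ≥ 3` and `n ≥ 2^(d-1)`,
`f d n ≤ (1/16) n³ / √(3 log₂ n - 5)`. -/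
theorem tail_cubic_bound
    (f : ℕ → ℕ → ℕ)
    (kk : ∀ d n, 3 ≤ d → 2 * d ≤ n →
      f d n ≤ f (d - 1) (n - 1) + 2 * f d (n / 2) + 2)
    (low : ∀ d n, 3 ≤ d → d ≤ n → n < 2 * d → f d n ≤ f (d - 1) (n - 1))
    (remove : ∀ d n, 3 ≤ d → d ≤ n → f (d - 1) (n - 1) + 1 ≤ f (d - 1) n)
    (base3 : ∀ n, 3 ≤ n → f 3 n ≤ n - 3) :
    ∀ d n, 3 ≤ d → 2 ^ (d - 1) ≤ n →
      (f d n : ℝ) ≤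
        (1 / 16) * (n : ℝ) ^ 3 / Real.sqrt (3 * Real.logb 2 (n : ℝ) - 5) :=
  tail_cubic_bound_general f kk low base3
end

section
/- For all integers d ≥ 3 and all natural numbers n ≥ 2^(d−1), one has (n − 3) · C(⌊log₂(n/4)⌋ + d − 3, ⌊log₂(n/4)⌋) ≤ (1/16) · n³ / √(3·log₂ n − 5) (as real numbers). -/
lemma cb_sq (k : ℕ) : (Nat.centralBinom k)^2 * (3*k+1) ≤ 16^k := by
  induction k with
  | zero => simp [Nat.centralBinom]
  | succ k ih =>
    have h := Nat.succ_mul_centralBinom_succ k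
    have hpos : 0 < (k+1)^2 * (3*k+1) := by positivity
    refine Nat.le_of_mul_le_mul_right ?_ hpos
    have hpoly : 4*(2*k+1)^2*(3*(k+1)+1) ≤ 16*(k+1)^2*(3*k+1) := by nlinarith
    calc Nat.centralBinom (k+1)^2 * (3*(k+1)+1) * ((k+1)^2 * (3*k+1))
        = ((k+1) * Nat.centralBinom (k+1))^2 * ((3*(k+1)+1) * (3*k+1)) := by ring
      _ = (2*(2*k+1) * Nat.centralBinom k)^2 * ((3*(k+1)+1) * (3*k+1)) := by rw [h]
      _ = (4*(2*k+1)^2*(3*(k+1)+1)) * ((Nat.centralBinom k)^2 * (3*k+1)) := by ring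
      _ ≤ (16*(k+1)^2*(3*k+1)) * 16^k := Nat.mul_le_mul hpoly ih
      _ = 16^(k+1) * ((k+1)^2 * (3*k+1)) := by ring


lemma key (k : ℕ) (N : ℝ) (hN4 : 4 ≤ N) (hN : (2:ℝ)^(k+2) ≤ N) (hN7 : k = 0 → N ≤ 7) :
    (N-3)^2 * 16^k * (3 * Real.logb 2 N - 5) * 256 ≤ N^6 * (3*k+1) := by
  have hNpos : (0:ℝ) < N := by linarith
  set u := Real.logb 2 N with hu
  have hNu : (2:ℝ) ^ u = N := Real.rpow_logb (by norm_num) (by norm_num) hNpos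
  have hule : ((k:ℝ) + 2) ≤ u := by
    have : Real.logb 2 ((2:ℝ)^(k+2)) ≤ u := by
      apply Real.logb_le_logb_of_le (by norm_num) (by positivity) hN
    simpa [Real.logb_pow, Real.logb_self_eq_one] using this
  set s := u - ((k:ℝ) + 2) with hs
  have hs0 : 0 ≤ s := by simp [hs]; linarith
  set A := (2:ℝ) ^ (4*s) with hA
  have hA1 : 1 + (27/10)*s ≤ A := by
    have hexp : 4*s*Real.log 2 + 1 ≤ Real.exp (4*s*Real.log 2) := Real.add_one_le_exp _
    have hl2 : (0.6931471803:ℝ) < Real.log 2 := Real.log_two_gt_d9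
    have : A = Real.exp (4*s*Real.log 2) := by
      rw [hA, Real.rpow_def_of_pos (by norm_num)]; ring_nf
    rw [this]
    nlinarith [mul_nonneg hs0 (by linarith : (0:ℝ) ≤ Real.log 2)]
  have hN4A : N^4 = 16^k * 256 * A := by
    have h1 : N^4 = (2:ℝ) ^ ((4:ℝ)*u) := by
      rw [← hNu, ← Real.rpow_natCast ((2:ℝ)^u) 4, ← Real.rpow_mul (by norm_num)]
      norm_num; ring_nf
    have h2 : (4:ℝ)*u = (↑(4*k+8) : ℝ) + 4*s := by push_cast; ring
    rw [h1, h2, Real.rpow_add (by norm_num), Real.rpow_natCast]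
    rw [pow_add, pow_mul]
    norm_num [hA]
  have hu5 : 3*u - 5 = 3*(k:ℝ) + 1 + 3*s := by rw [hs]; ring
  have hmain : (N-3)^2 * (3*(k:ℝ)+1+3*s) ≤ N^2 * A * (3*(k:ℝ)+1) := by
    rcases Nat.eq_zero_or_pos k with hk | hk
    · subst hk
      have h7 : N ≤ 7 := hN7 rfl
      have hfrac : (N-3)^2 ≤ (16/49) * N^2 := by nlinarith
      have : (16/49:ℝ) * (1+3*s) ≤ 1 + (27/10)*s := by nlinarith
      push_cast
      nlinarith [sq_nonneg N, mul_nonneg hs0 (sq_nonneg N), sq_nonneg (N-3)]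
    · have hk1 : (1:ℝ) ≤ (k:ℝ) := by exact_mod_cast hk
      have hsq : (N-3)^2 ≤ N^2 := by nlinarith
      have hfac : 3*(k:ℝ)+1+3*s ≤ (1 + (27/10)*s) * (3*(k:ℝ)+1) := by nlinarith
      have hApos : 0 ≤ 3*(k:ℝ)+1+3*s := by positivity
      calc (N-3)^2 * (3*(k:ℝ)+1+3*s) ≤ N^2 * (3*(k:ℝ)+1+3*s) := by
            apply mul_le_mul_of_nonneg_right hsq hApos
        _ ≤ N^2 * ((1 + (27/10)*s) * (3*(k:ℝ)+1)) := by
            apply mul_le_mul_of_nonneg_left hfac (by positivity)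
        _ ≤ N^2 * (A * (3*(k:ℝ)+1)) := by
            apply mul_le_mul_of_nonneg_left (mul_le_mul_of_nonneg_right hA1 (by positivity)) (by positivity)
        _ = N^2 * A * (3*(k:ℝ)+1) := by ring
  have h16 : (0:ℝ) < 16^k * 256 := by positivity
  calc (N-3)^2 * 16^k * (3*u - 5) * 256
      = ((N-3)^2 * (3*(k:ℝ)+1+3*s)) * (16^k * 256) := by rw [hu5]; ring
    _ ≤ (N^2 * A * (3*(k:ℝ)+1)) * (16^k * 256) := by
        apply mul_le_mul_of_nonneg_right hmain (le_of_lt h16)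
    _ = N^2 * (16^k * 256 * A) * (3*(k:ℝ)+1) := by ring
    _ = N^6 * (3*(k:ℝ)+1) := by rw [← hN4A]; ring



/-- For `d ≥ 3` and `n ≥ 2^(d-1)`,
`(n - 3) · C(⌊log₂(n/4)⌋ + d - 3, ⌊log₂(n/4)⌋) ≤ (1/16) n³ / √(3 log₂ n - 5)`. -/
theorem binomial_le_cubic (d n : ℕ) (hd : 3 ≤ d) (hn : 2 ^ (d - 1) ≤ n) :
    (((n - 3) * Nat.choose (Nat.log 2 (n / 4) + d - 3) (Nat.log 2 (n / 4)) : ℕ) : ℝ) ≤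
      (1 / 16) * (n : ℝ) ^ 3 / Real.sqrt (3 * Real.logb 2 (n : ℝ) - 5) := by
  set k := Nat.log 2 (n / 4) with hk
  -- basic nat facts
  have hn4 : 4 ≤ n := le_trans (by calc (4:ℕ) = 2^2 := rfl
    _ ≤ 2^(d-1) := Nat.pow_le_pow_right (by norm_num) (by omega)) hn
  have hq1 : 1 ≤ n / 4 := Nat.one_le_div_iff (by norm_num) |>.mpr hn4
  -- 2^(k+2) ≤ n
  have hk2 : 2^(k+2) ≤ n := by
    have h1 : 2^k ≤ n / 4 := Nat.pow_log_le_self 2 (by omega)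
    calc 2^(k+2) = 2^k * 4 := by ring
      _ ≤ (n/4) * 4 := by omega
      _ ≤ n := Nat.div_mul_le_self n 4
  -- k = 0 → n ≤ 7
  have hk7 : k = 0 → n ≤ 7 := by
    intro h0
    have := Nat.lt_pow_succ_log_self (by norm_num : 1 < 2) (n / 4)
    rw [← hk, h0] at this
    omega
  -- d - 3 ≤ k
  have hdk : d - 3 ≤ k := by
    have h1 : 2^(d-3) ≤ n / 4 := by
      have : 2^(d-1)/4 ≤ n/4 := Nat.div_le_div_right hn
      have h2 : 2^(d-1) = 2^(d-3)*4 := by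
        have : d - 1 = (d-3) + 2 := by omega
        rw [this, pow_add]; norm_num
      omega
    calc d - 3 = Nat.log 2 (2^(d-3)) := (Nat.log_pow (by norm_num) _).symm
      _ ≤ k := Nat.log_mono_right h1
  -- bound choose by central binom
  have hch : Nat.choose (k + d - 3) k ≤ Nat.centralBinom k := by
    have : k + d - 3 ≤ 2*k := by omega
    calc Nat.choose (k + d - 3) k ≤ Nat.choose (2*k) k := Nat.choose_le_choose k this
      _ = Nat.centralBinom k := rfl
  -- real setup
  set N := (n:ℝ) with hN
  have hN4 : (4:ℝ) ≤ N := by show (4:ℝ) ≤ (n:ℝ); exact_mod_cast hn4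
  have hNk : (2:ℝ)^(k+2) ≤ N := by show (2:ℝ)^(k+2) ≤ (n:ℝ); exact_mod_cast hk2
  have hN7 : k = 0 → N ≤ 7 := fun h => by show (n:ℝ) ≤ 7; exact_mod_cast hk7 h
  set L := 3 * Real.logb 2 N - 5 with hL
  set c := (Nat.centralBinom k : ℝ) with hc
  have hc0 : 0 ≤ c := by rw [hc]; positivity
  have hL1 : (1:ℝ) ≤ L := by
    have : Real.logb 2 (4:ℝ) ≤ Real.logb 2 N :=
      Real.logb_le_logb_of_le (by norm_num) (by norm_num) hN4
    have h4 : Real.logb 2 (4:ℝ) = 2 := by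
      rw [show (4:ℝ) = 2^(2:ℕ) by norm_num, Real.logb_pow]; simp
    rw [hL]; linarith [h4 ▸ this]
  have hLs : (1:ℝ) ≤ Real.sqrt L := by
    have h := Real.sqrt_le_sqrt hL1
    simpa using h
  have hsk1 : (1:ℝ) ≤ Real.sqrt (3*(k:ℝ)+1) := by
    have h := Real.sqrt_le_sqrt (show (1:ℝ) ≤ 3*(k:ℝ)+1 by
      have := Nat.cast_nonneg (α := ℝ) k; linarith)
    simpa using h
  -- central binom sqrt bound
  have hcb : c * Real.sqrt (3*(k:ℝ)+1) ≤ 4^k := by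
    have h1 : c^2 * (3*(k:ℝ)+1) ≤ 16^k := by rw [hc]; exact_mod_cast cb_sq k
    have h2 : c * Real.sqrt (3*(k:ℝ)+1) = Real.sqrt (c^2 * (3*(k:ℝ)+1)) := by
      rw [Real.sqrt_mul (sq_nonneg c), Real.sqrt_sq hc0]
    rw [h2, show (4:ℝ)^k = Real.sqrt ((4^k)^2) from (Real.sqrt_sq (by positivity)).symm]
    apply Real.sqrt_le_sqrt
    calc c^2 * (3*(k:ℝ)+1) ≤ 16^k := h1
      _ = (4^k)^2 := by rw [show (16:ℝ) = 4^2 by norm_num, ← pow_mul, pow_mul']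
  -- key polynomial bound
  have hkey : (N-3)^2 * 16^k * L * 256 ≤ N^6 * (3*(k:ℝ)+1) := key k N hN4 hNk hN7
  -- squaring step: (N-3) * 4^k * √L ≤ N^3 * √(3k+1) / 16
  have hsqr : (N-3) * 4^k * Real.sqrt L ≤ N^3 * Real.sqrt (3*(k:ℝ)+1) / 16 := by
    have hX0 : (0:ℝ) ≤ (N-3) * 4^k * Real.sqrt L := by
      apply mul_nonneg (mul_nonneg (by linarith) (by positivity)) (Real.sqrt_nonneg _)
    have hY0 : (0:ℝ) ≤ N^3 * Real.sqrt (3*(k:ℝ)+1) / 16 := by positivity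
    have h2 : ((N-3) * 4^k * Real.sqrt L)^2 ≤ (N^3 * Real.sqrt (3*(k:ℝ)+1) / 16)^2 := by
      have e1 : ((N-3) * 4^k * Real.sqrt L)^2 = (N-3)^2 * 16^k * L := by
        rw [mul_pow, mul_pow, Real.sq_sqrt (by linarith),
          show ((4:ℝ)^k)^2 = 16^k by rw [← pow_mul, pow_mul']; norm_num]
      have e2 : (N^3 * Real.sqrt (3*(k:ℝ)+1) / 16)^2 = N^6 * (3*(k:ℝ)+1) / 256 := by
        rw [div_pow, mul_pow, Real.sq_sqrt (by positivity)]
        norm_num [← pow_mul]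
      rw [e1, e2]
      nlinarith [hkey]
    calc (N-3) * 4^k * Real.sqrt L
        = Real.sqrt (((N-3) * 4^k * Real.sqrt L)^2) := (Real.sqrt_sq hX0).symm
      _ ≤ Real.sqrt ((N^3 * Real.sqrt (3*(k:ℝ)+1) / 16)^2) := Real.sqrt_le_sqrt h2
      _ = N^3 * Real.sqrt (3*(k:ℝ)+1) / 16 := Real.sqrt_sq hY0
  -- assemble
  have hcast : (((n - 3) * Nat.choose (k + d - 3) k : ℕ) : ℝ)
      = (N - 3) * (Nat.choose (k + d - 3) k : ℝ) := by
    push_cast [Nat.cast_sub (by omega : 3 ≤ n)]; ring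
  rw [hcast, div_eq_mul_inv, ← div_eq_mul_inv, le_div_iff₀ (by linarith : (0:ℝ) < Real.sqrt L)]
  have hchR : (Nat.choose (k + d - 3) k : ℝ) ≤ c := by rw [hc]; exact_mod_cast hch
  have hfinal : (N - 3) * c * Real.sqrt L ≤ 1/16 * N^3 := by
    have hskpos : (0:ℝ) < Real.sqrt (3*(k:ℝ)+1) := by linarith
    refine le_of_mul_le_mul_right ?_ hskpos
    calc (N - 3) * c * Real.sqrt L * Real.sqrt (3*(k:ℝ)+1)
        = (c * Real.sqrt (3*(k:ℝ)+1)) * ((N-3) * Real.sqrt L) := by ring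
      _ ≤ 4^k * ((N-3) * Real.sqrt L) := by
          apply mul_le_mul_of_nonneg_right hcb
          apply mul_nonneg (by linarith) (Real.sqrt_nonneg _)
      _ = (N-3) * 4^k * Real.sqrt L := by ring
      _ ≤ N^3 * Real.sqrt (3*(k:ℝ)+1) / 16 := hsqr
      _ = 1/16 * N^3 * Real.sqrt (3*(k:ℝ)+1) := by ring
  calc (N - 3) * (Nat.choose (k + d - 3) k : ℝ) * Real.sqrt L
      ≤ (N - 3) * c * Real.sqrt L := by
        apply mul_le_mul_of_nonneg_right (mul_le_mul_of_nonneg_left hchR (by linarith)) (Real.sqrt_nonneg _)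
    _ ≤ 1/16 * N^3 := hfinal
end

section
/- For every natural number k, the central binomial coefficient satisfies C(2k, k) ≤ 4^k / √(3k + 1) (as real numbers). -/
/-! Squaring removes the root: it suffices that `C(2k,k)² (3k+1) ≤ 16^k`, which follows by induction
from `(k+1) C(2k+2,k+1) = 2(2k+1) C(2k,k)`, since the step needs only
`(2k+1)² (3k+4) ≤ 4 (k+1)² (3k+1)`, an inequality whose two sides differ by exactly `k`. -/

theorem Nat.sq_two_mul_add_one_mul_le (n : ℕ) :
    (2 * n + 1) ^ 2 * (3 * (n + 1) + 1) ≤ 4 * (n + 1) ^ 2 * (3 * n + 1) := by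
  ring_nf
  omega

theorem Nat.centralBinom_sq_mul_le_sixteen_pow (k : ℕ) :
    k.centralBinom ^ 2 * (3 * k + 1) ≤ 16 ^ k := by
  induction k with
  | zero => simp
  | succ n ih =>
    refine Nat.le_of_mul_le_mul_left ?_ (pow_pos n.succ_pos 2)
    calc (n + 1) ^ 2 * ((n + 1).centralBinom ^ 2 * (3 * (n + 1) + 1))
        = 4 * n.centralBinom ^ 2 * ((2 * n + 1) ^ 2 * (3 * (n + 1) + 1)) := by
          rw [← mul_assoc, ← mul_pow, Nat.succ_mul_centralBinom_succ]; ring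
      _ ≤ 4 * n.centralBinom ^ 2 * (4 * (n + 1) ^ 2 * (3 * n + 1)) :=
          Nat.mul_le_mul_left _ n.sq_two_mul_add_one_mul_le
      _ = 16 * (n + 1) ^ 2 * (n.centralBinom ^ 2 * (3 * n + 1)) := by ring
      _ ≤ 16 * (n + 1) ^ 2 * 16 ^ n := Nat.mul_le_mul_left _ ih
      _ = (n + 1) ^ 2 * 16 ^ (n + 1) := by ring

/-- The central binomial coefficient satisfies `C(2k, k) ≤ 4^k / √(3k + 1)`. -/
theorem centralBinom_le_four_pow_div_sqrt (k : ℕ) :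
    (Nat.centralBinom k : ℝ) ≤ 4 ^ k / Real.sqrt (3 * (k : ℝ) + 1) := by
  rw [le_div_iff₀ (by positivity)]
  have hsq : ((k.centralBinom ^ 2 * (3 * k + 1) : ℕ) : ℝ) ≤ ((16 ^ k : ℕ) : ℝ) :=
    Nat.cast_le.mpr k.centralBinom_sq_mul_le_sixteen_pow
  calc (k.centralBinom : ℝ) * √(3 * k + 1)
      = √(((k.centralBinom ^ 2 * (3 * k + 1) : ℕ) : ℝ)) := by
        push_cast
        rw [Real.sqrt_mul (by positivity), Real.sqrt_sq (by positivity)]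
    _ ≤ √(((16 ^ k : ℕ) : ℝ)) := Real.sqrt_le_sqrt hsq
    _ = 4 ^ k := by
        rw [show (16 : ℕ) ^ k = (4 ^ k) ^ 2 by rw [← pow_mul, mul_comm, pow_mul]; norm_num]
        push_cast
        exact Real.sqrt_sq (by positivity)
end

section
/- For every real ε > 0, every integer d ≥ 3, and every natural number n with (n : ℝ) ≥ 2^(1 + (d−3)/(2^ε − 1)), one has C(⌊log₂ n⌋ + d − 3, ⌊log₂ n⌋) ≤ (2^ε · e)^(⌊log₂ n⌋) ≤ n^(ε + 1/ln 2) (as real numbers). -/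
/-- For `ε > 0`, `d ≥ 3` and `n ≥ 2^(1 + (d-3)/(2^ε - 1))`, the binomial
coefficient satisfies
`C(⌊log₂ n⌋ + d - 3, ⌊log₂ n⌋) ≤ (2^ε e)^⌊log₂ n⌋ ≤ n^(ε + 1/ln 2)`. -/
theorem binomial_le_epsilon_pow (ε : ℝ) (hε : 0 < ε) (d n : ℕ) (hd : 3 ≤ d)
    (hn : (n : ℝ) ≥ 2 ^ ((1 : ℝ) + ((d : ℝ) - 3) / (2 ^ ε - 1))) :
    (Nat.choose (Nat.log 2 n + d - 3) (Nat.log 2 n) : ℝ) ≤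
        ((2 : ℝ) ^ ε * Real.exp 1) ^ (Nat.log 2 n) ∧
      ((2 : ℝ) ^ ε * Real.exp 1) ^ (Nat.log 2 n) ≤
        (n : ℝ) ^ (ε + 1 / Real.log 2) := by
  set L := Nat.log 2 n with hLdef
  have h2e : (1 : ℝ) < 2 ^ ε := Real.one_lt_rpow_iff_of_pos (by norm_num) |>.2 (Or.inl ⟨by norm_num, hε⟩)
  have h2e' : (0 : ℝ) < 2 ^ ε - 1 := by linarith
  have hm0 : (0 : ℝ) ≤ (d : ℝ) - 3 := by
    have : (3 : ℝ) ≤ d := by exact_mod_cast hd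
    linarith
  -- n ≥ 2
  have hn2 : 2 ≤ n := by
    have h1 : (2 : ℝ) ^ (1 : ℝ) ≤ 2 ^ ((1 : ℝ) + ((d : ℝ) - 3) / (2 ^ ε - 1)) := by
      apply Real.rpow_le_rpow_of_exponent_le (by norm_num)
      have := div_nonneg hm0 h2e'.le
      linarith
    have : (2 : ℝ) ≤ n := by
      rw [Real.rpow_one] at h1; linarith [hn]
    exact_mod_cast this
  have hn0 : 0 < n := by omega
  have hL1 : 1 ≤ L := Nat.le_log_of_pow_le (by norm_num) hn2
  have hLpos : (0 : ℝ) < (L : ℝ) := by exact_mod_cast hL1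
  -- 2^L ≤ n < 2^(L+1)
  have hlow : (2 : ℝ) ^ L ≤ n := by exact_mod_cast Nat.pow_log_le_self 2 hn0.ne'
  have hup : (n : ℝ) < 2 ^ (L + 1) := by exact_mod_cast Nat.lt_pow_succ_log_self (by norm_num) n
  -- key : (d-3) ≤ (2^ε - 1) * L
  have hkey : (d : ℝ) - 3 ≤ (2 ^ ε - 1) * L := by
    have h1 : (2 : ℝ) ^ ((1 : ℝ) + ((d : ℝ) - 3) / (2 ^ ε - 1)) < 2 ^ ((L : ℝ) + 1) := by
      calc (2 : ℝ) ^ ((1 : ℝ) + ((d : ℝ) - 3) / (2 ^ ε - 1)) ≤ n := hn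
        _ < 2 ^ (L + 1) := hup
        _ = 2 ^ ((L : ℝ) + 1) := by
            rw [← Real.rpow_natCast 2 (L + 1)]; push_cast; ring_nf
    have h2 : (1 : ℝ) + ((d : ℝ) - 3) / (2 ^ ε - 1) < (L : ℝ) + 1 :=
      (Real.rpow_lt_rpow_left_iff (by norm_num)).1 h1
    have h3 : ((d : ℝ) - 3) / (2 ^ ε - 1) < L := by linarith
    calc (d : ℝ) - 3 = ((d : ℝ) - 3) / (2 ^ ε - 1) * (2 ^ ε - 1) := by field_simp
      _ ≤ (L : ℝ) * (2 ^ ε - 1) := by nlinarith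
      _ = (2 ^ ε - 1) * L := by ring
  have hm : ((d - 3 : ℕ) : ℝ) = (d : ℝ) - 3 := by
    push_cast [hd]; ring
  -- ratio bound
  have hratio : ((L : ℝ) + ((d : ℝ) - 3)) / L ≤ 2 ^ ε := by
    rw [div_le_iff₀ hLpos]; nlinarith
  constructor
  · -- first inequality
    have hfac : (L : ℝ) ^ L / (Nat.factorial L : ℝ) ≤ Real.exp L :=
      Real.pow_div_factorial_le_exp _ hLpos.le L
    have hfacpos : (0 : ℝ) < (Nat.factorial L : ℝ) := by exact_mod_cast Nat.factorial_pos L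
    have hLpow : (0 : ℝ) < (L : ℝ) ^ L := pow_pos hLpos L
    have hinv : (1 : ℝ) / (Nat.factorial L : ℝ) ≤ Real.exp L / (L : ℝ) ^ L := by
      rw [div_le_div_iff₀ hfacpos hLpow]
      calc (1 : ℝ) * (L : ℝ) ^ L = (L : ℝ) ^ L := by ring
        _ ≤ Real.exp L * (Nat.factorial L) := by
            rw [← div_le_iff₀ hfacpos] at *; exact hfac
    have hC : (Nat.choose (L + d - 3) L : ℝ) ≤ ((L + d - 3 : ℕ) : ℝ) ^ L / (Nat.factorial L : ℝ) :=
      Nat.choose_le_pow_div L _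
    have hcast : ((L + d - 3 : ℕ) : ℝ) = (L : ℝ) + ((d : ℝ) - 3) := by
      have : L + d - 3 = L + (d - 3) := by omega
      rw [this]; push_cast [hd]; ring
    have hbase : (0 : ℝ) ≤ (L : ℝ) + ((d : ℝ) - 3) := by linarith
    calc (Nat.choose (L + d - 3) L : ℝ)
        ≤ ((L : ℝ) + ((d : ℝ) - 3)) ^ L / (Nat.factorial L : ℝ) := by rw [← hcast]; exact hC
      _ = ((L : ℝ) + ((d : ℝ) - 3)) ^ L * (1 / (Nat.factorial L : ℝ)) := by ring
      _ ≤ ((L : ℝ) + ((d : ℝ) - 3)) ^ L * (Real.exp L / (L : ℝ) ^ L) := by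
          exact mul_le_mul_of_nonneg_left hinv (pow_nonneg hbase L)
      _ = (((L : ℝ) + ((d : ℝ) - 3)) / L * Real.exp 1) ^ L := by
          rw [mul_pow, div_pow, ← Real.exp_nat_mul]
          ring_nf
      _ ≤ ((2 : ℝ) ^ ε * Real.exp 1) ^ L := by
          apply pow_le_pow_left₀
          · positivity
          · exact mul_le_mul_of_nonneg_right hratio (Real.exp_pos 1).le
  · -- second inequality
    have hlog2 : (0 : ℝ) < Real.log 2 := Real.log_pos (by norm_num)
    have hexp : Real.exp 1 ^ L ≤ (n : ℝ) ^ ((1 : ℝ) / Real.log 2) := by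
      have hln : (L : ℝ) * Real.log 2 ≤ Real.log n := by
        calc (L : ℝ) * Real.log 2 = Real.log ((2 : ℝ) ^ L) := by
              rw [Real.log_pow]
          _ ≤ Real.log n := Real.log_le_log (by positivity) hlow
      calc Real.exp 1 ^ L = Real.exp L := by rw [← Real.exp_nat_mul]; ring_nf
        _ ≤ Real.exp (Real.log n / Real.log 2) := by
            apply Real.exp_le_exp.2
            rw [le_div_iff₀ hlog2]; exact hln
        _ = (n : ℝ) ^ ((1 : ℝ) / Real.log 2) := by
            rw [Real.rpow_def_of_pos (by exact_mod_cast hn0)]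
            ring_nf
    have h2pow : ((2 : ℝ) ^ ε) ^ L ≤ (n : ℝ) ^ ε := by
      calc ((2 : ℝ) ^ ε) ^ L = ((2 : ℝ) ^ L) ^ ε := by
            rw [← Real.rpow_natCast ((2:ℝ)^ε) L, ← Real.rpow_natCast (2:ℝ) L,
              ← Real.rpow_mul (by norm_num), ← Real.rpow_mul (by norm_num), mul_comm]
        _ ≤ (n : ℝ) ^ ε := Real.rpow_le_rpow (by positivity) hlow hε.le
    calc ((2 : ℝ) ^ ε * Real.exp 1) ^ L = ((2 : ℝ) ^ ε) ^ L * Real.exp 1 ^ L := mul_pow _ _ _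
      _ ≤ (n : ℝ) ^ ε * (n : ℝ) ^ ((1 : ℝ) / Real.log 2) := by
          apply mul_le_mul h2pow hexp (by positivity) (by positivity)
      _ = (n : ℝ) ^ (ε + 1 / Real.log 2) := by
          rw [← Real.rpow_add (by exact_mod_cast hn0)]
end

section
/- For every real ε > 0, every integer d ≥ 3, and every natural number n with (n : ℝ) ≥ 2^(32·d/ε²), one has C(⌊log₂ n⌋ + d − 3, ⌊log₂ n⌋) ≤ n^ε (as real numbers). -/
/-!
Write `L = ⌊log₂ n⌋` and `k = d - 3`. Comparing `C(L + k, L) L^L k^k` with one term of the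
binomial expansion of `(L + k)^(L + k)` gives the entropy bound
`log C(L + k, L) ≤ (L + k) log (L + k) - L log L - k log k`, and `log t ≤ t - 1` applied at
`t = √((L + k) / L)` and `t = √((L + k) / k)` turns it into `C(L + k, L) ≤ exp (2 √(L k))`.
Since `2^(32 d / ε²) ≤ n < 2^(L + 1)`, we get `16 d L ≤ ε² L²`, hence `2 √(L k) ≤ ε L log 2`,
and `exp (ε L log 2) ≤ n^ε` because `2^L ≤ n`.
-/

open Real

theorem Nat.choose_mul_pow_mul_pow_le (a b : ℕ) :
    (a + b).choose a * a ^ a * b ^ b ≤ (a + b) ^ (a + b) := by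
  rw [add_pow]
  calc (a + b).choose a * a ^ a * b ^ b = a ^ a * b ^ (a + b - a) * (a + b).choose a := by
        rw [Nat.add_sub_cancel_left]; ring
    _ ≤ ∑ i ∈ Finset.range (a + b + 1), a ^ i * b ^ (a + b - i) * (a + b).choose i :=
        Finset.single_le_sum (f := fun i => a ^ i * b ^ (a + b - i) * (a + b).choose i)
          (fun _ _ => Nat.zero_le _) (by simp)

theorem Real.log_choose_add_le (a b : ℕ) :
    log ((a + b).choose a) ≤ (a + b) * log (a + b) - a * log a - b * log b := by
  have hchoose : 0 < (a + b).choose a := Nat.choose_pos (Nat.le_add_right a b)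
  have ha : (a : ℝ) ^ a ≠ 0 := by exact_mod_cast Nat.pow_self_pos.ne'
  have hb : (b : ℝ) ^ b ≠ 0 := by exact_mod_cast Nat.pow_self_pos.ne'
  have hpos : 0 < ((a + b).choose a : ℝ) * (a ^ a * b ^ b) := by
    exact_mod_cast Nat.mul_pos hchoose (Nat.mul_pos Nat.pow_self_pos Nat.pow_self_pos)
  have h := log_le_log hpos <| show _ ≤ ((a : ℝ) + b) ^ (a + b) by
    rw [← mul_assoc]; exact_mod_cast a.choose_mul_pow_mul_pow_le b
  rw [log_mul (by positivity) (mul_ne_zero ha hb), log_mul ha hb, log_pow, log_pow, log_pow] at h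
  push_cast at h; linarith

theorem Real.mul_log_sub_mul_log_le {x s : ℝ} (hx : 0 ≤ x) (hxs : x ≤ s) :
    x * log s - x * log x ≤ 2 * (√x * √s - x) := by
  rcases hx.eq_or_lt with rfl | hx
  · simp
  have hu : 0 < √x := sqrt_pos.2 hx
  have hv : 0 < √s := sqrt_pos.2 (hx.trans_le hxs)
  have hlog : log √s - log √x ≤ √s / √x - 1 := by
    rw [← log_div hv.ne' hu.ne']; exact log_le_sub_one_of_pos (by positivity)
  rw [log_sqrt (hx.trans_le hxs).le, log_sqrt hx.le] at hlog
  calc x * log s - x * log x = 2 * x * (log s / 2 - log x / 2) := by ring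
    _ ≤ 2 * x * (√s / √x - 1) := by gcongr
    _ = 2 * (x / √x * √s - x) := by ring
    _ = 2 * (√x * √s - x) := by rw [div_sqrt]

theorem Real.add_mul_log_add_sub_le {x y : ℝ} (hx : 0 ≤ x) (hy : 0 ≤ y) :
    (x + y) * log (x + y) - x * log x - y * log y ≤ 2 * √(x * y) := by
  have h₁ := mul_log_sub_mul_log_le hx (le_add_of_nonneg_right hy : x ≤ x + y)
  have h₂ := mul_log_sub_mul_log_le hy (le_add_of_nonneg_left hx : y ≤ x + y)
  have hx' : √x ≤ √(x + y) := sqrt_le_sqrt (by linarith)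
  have hy' : √y ≤ √(x + y) := sqrt_le_sqrt (by linarith)
  rw [sqrt_mul hx]
  nlinarith [mul_nonneg (sub_nonneg.2 hx') (sub_nonneg.2 hy'), mul_self_sqrt (add_nonneg hx hy)]

theorem Nat.choose_add_le_exp (a b : ℕ) :
    ((a + b).choose a : ℝ) ≤ exp (2 * √(a * b)) := by
  rw [← log_le_iff_le_exp (by exact_mod_cast Nat.choose_pos (Nat.le_add_right a b))]
  exact (log_choose_add_le a b).trans (add_mul_log_add_sub_le a.cast_nonneg b.cast_nonneg)

theorem Real.lt_natLog_add_one_of_rpow_le {b n : ℕ} (hb : 1 < b) {x : ℝ} (h : (b : ℝ) ^ x ≤ n) :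
    x < Nat.log b n + 1 := by
  have hn : (n : ℝ) < (b : ℝ) ^ ((Nat.log b n + 1 : ℕ) : ℝ) := by
    rw [rpow_natCast]; exact_mod_cast Nat.lt_pow_succ_log_self hb n
  exact_mod_cast (rpow_lt_rpow_left_iff (by exact_mod_cast hb)).1 (h.trans_lt hn)

theorem Real.natLog_mul_log_le_log {b : ℕ} (hb : 1 < b) (n : ℕ) :
    (Nat.log b n : ℝ) * log b ≤ log n :=
  (le_div_iff₀ (log_pos (by exact_mod_cast hb))).1 (natLog_le_logb n b)

theorem binomial_near_boundary_small_general (ε : ℝ) (hε : 0 < ε) (d n : ℕ)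
    (hn : (n : ℝ) ≥ 2 ^ (32 * (d : ℝ) / ε ^ 2)) :
    (Nat.choose (Nat.log 2 n + d - 3) (Nat.log 2 n) : ℝ) ≤ (n : ℝ) ^ ε := by
  set L := Nat.log 2 n
  have hn₀ : (0 : ℝ) < n := lt_of_lt_of_le (by positivity) hn
  have hdL : 32 * (d : ℝ) < ε ^ 2 * (L + 1) := by
    have := lt_natLog_add_one_of_rpow_le (x := 32 * d / ε ^ 2) one_lt_two (by exact_mod_cast hn)
    rw [div_lt_iff₀ (by positivity)] at this; linarith
  have hLn : (L : ℝ) * log 2 ≤ log n := by exact_mod_cast natLog_mul_log_le_log one_lt_two n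
  have hsqrt : 2 * √(L * (d - 3 : ℕ)) ≤ ε * L * log 2 := by
    have hk : ((d - 3 : ℕ) : ℝ) ≤ d := by exact_mod_cast Nat.sub_le d 3
    have hL : (L : ℝ) ≤ L ^ 2 := by exact_mod_cast Nat.le_self_pow two_ne_zero L
    have hlog2 : 1 / 2 < log 2 := lt_trans (by norm_num) log_two_gt_d9
    rw [← le_div_iff₀' two_pos, sqrt_le_iff]
    refine ⟨by positivity, ?_⟩
    nlinarith [mul_le_mul_of_nonneg_left hk (L.cast_nonneg : (0 : ℝ) ≤ L),
      mul_le_mul_of_nonneg_left hL (sq_nonneg ε), mul_le_mul_of_nonneg_left hdL.le L.cast_nonneg,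
      mul_self_le_mul_self (by norm_num) hlog2.le]
  calc (Nat.choose (L + d - 3) L : ℝ) ≤ Nat.choose (L + (d - 3)) L := by
        exact_mod_cast Nat.choose_le_choose L (by omega)
    _ ≤ exp (2 * √(L * (d - 3 : ℕ))) := Nat.choose_add_le_exp L (d - 3)
    _ ≤ exp (log n * ε) := exp_le_exp.2 (by nlinarith)
    _ = (n : ℝ) ^ ε := (rpow_def_of_pos hn₀ ε).symm

/-- For `ε > 0`, `d ≥ 3` and `n ≥ 2^(32d/ε²)`, the binomial coefficient
satisfies `C(⌊log₂ n⌋ + d - 3, ⌊log₂ n⌋) ≤ n^ε`. -/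
theorem binomial_near_boundary_small (ε : ℝ) (hε : 0 < ε) (d n : ℕ)
    (hd : 3 ≤ d) (hn : (n : ℝ) ≥ 2 ^ (32 * (d : ℝ) / ε ^ 2)) :
    (Nat.choose (Nat.log 2 n + d - 3) (Nat.log 2 n) : ℝ) ≤ (n : ℝ) ^ ε :=
  binomial_near_boundary_small_general ε hε d n hn
end
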